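/- arXiv:1501.07746 — 4 statements merged into one kernel-verified Lean document; each statement's English description precedes it below -/
import Mathlib

section
/- For all Schwartz functions f, g on ℝ^{2n+1} and all k ∈ {1,2}, 1 ≤ j ≤ n: T_{kj}(f *₁ g) = T_{kj}f *₁ g + f *₁ T_{kj}g, and moreover T₃(f *₁ g) = T₃f *₁ g + f *₁ T₃g + Σ_{j=1}^n T_{1j}f *₁ T_{2j}g. -/
open MeasureTheory Complex Topology Filter
open scoped RealInnerProductSpace ENNReal

noncomputable section

/-- `ℝⁿ` as a Euclidean space. -/
abbrev E (n : ℕ) := EuclideanSpace ℝ (Fin n)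

/-- The underlying space `ℝⁿ × ℝⁿ × ℝ` of the Heisenberg group `𝕙ⁿ`. -/
abbrev H (n : ℕ) := E n × E n × ℝ

/-- Heisenberg multiplication. -/
def hmul {n : ℕ} (u v : H n) : H n :=
  (u.1 + v.1, u.2.1 + v.2.1, u.2.2 + v.2.2 + ⟪u.1, v.2.1⟫)

/-- Heisenberg inverse. -/
def hinv {n : ℕ} (u : H n) : H n := (-u.1, -u.2.1, -u.2.2 + ⟪u.1, u.2.1⟫)

/-- Heisenberg convolution `(F *₁ G)(u) = ∫ F(u ∘ v⁻¹) G(v) dv`. -/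
def conv1 {n : ℕ} (F G : H n → ℂ) (u : H n) : ℂ := ∫ v, F (hmul u (hinv v)) * G v

/-!
Put `w = u ∘ v⁻¹`, so that `u = w ∘ v`. Along the group law the coordinates `u_{kj}` are additive,
`u_{kj} = w_{kj} + v_{kj}`, while `u₃ = w₃ + v₃ + Σ_j w_{1j} v_{2j}`. Multiplying the integrand
`f(w) g(v)` of `(f *₁ g)(u)` by the coordinate of `u`, expanded in this way, splits it into the
integrands on the right-hand side; each converges because a coordinate times a Schwartz function is
again a Schwartz function.
-/

open scoped SchwartzMap

namespace SchwartzMap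

variable {V : Type*} [NormedAddCommGroup V] [NormedSpace ℝ V]

theorem exists_coe_eq_mul (f : 𝓢(V, ℂ)) {p : V → ℂ} (hp : p.HasTemperateGrowth) :
    ∃ φ : 𝓢(V, ℂ), ⇑φ = fun x => p x * f x :=
  ⟨smulLeftCLM ℂ p f, by ext x; simp [hp]⟩

end SchwartzMap

theorem ContinuousLinearMap.hasTemperateGrowth_ofReal_comp {V : Type*} [NormedAddCommGroup V]
    [NormedSpace ℝ V] (ℓ : V →L[ℝ] ℝ) : (fun x => (ℓ x : ℂ)).HasTemperateGrowth :=
  Function.Complex.hasTemperateGrowth_ofReal.comp ℓ.hasTemperateGrowth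

variable {n : ℕ}

theorem hmul_hinv_cancel_right (u v : H n) : hmul (hmul u (hinv v)) v = u := by
  simp only [hmul, hinv, inner_add_left, inner_neg_left, inner_neg_right]
  ext <;> simp; ring

theorem hmul_snd_snd (w v : H n) : (hmul w v).2.2 = w.2.2 + v.2.2 + ∑ j, w.1 j * v.2.1 j := by
  simp [hmul, PiLp.inner_apply, mul_comm]

theorem continuous_hmul_hinv (u : H n) : Continuous fun v => hmul u (hinv v) := by
  unfold hmul hinv; fun_prop

instance isAddHaarMeasure_volume : (volume : Measure (H n)).IsAddHaarMeasure :=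
  have : (volume : Measure (E n × ℝ)).IsAddHaarMeasure := Measure.prod.instIsAddHaarMeasure _ _
  Measure.prod.instIsAddHaarMeasure _ _

theorem integrable_conv1_integrand {F G : H n → ℂ} (hF : ∃ φ : 𝓢(H n, ℂ), ⇑φ = F)
    (hG : ∃ ψ : 𝓢(H n, ℂ), ⇑ψ = G) (u : H n) :
    Integrable fun v => F (hmul u (hinv v)) * G v := by
  obtain ⟨φ, rfl⟩ := hF
  obtain ⟨ψ, rfl⟩ := hG
  exact ψ.integrable.bdd_mul (φ.continuous.comp (continuous_hmul_hinv u)).aestronglyMeasurable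
    (ae_of_all _ fun _ => φ.norm_le_seminorm ℂ _)

theorem hasTemperateGrowth_coord_fst (j : Fin n) :
    (fun w : H n => (w.1 j : ℂ)).HasTemperateGrowth :=
  ((EuclideanSpace.proj j).comp (.fst ℝ (E n) (E n × ℝ))).hasTemperateGrowth_ofReal_comp

theorem hasTemperateGrowth_coord_snd_fst (j : Fin n) :
    (fun w : H n => (w.2.1 j : ℂ)).HasTemperateGrowth :=
  (((EuclideanSpace.proj j).comp (.fst ℝ (E n) ℝ)).comp
    (.snd ℝ (E n) (E n × ℝ))).hasTemperateGrowth_ofReal_comp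

theorem hasTemperateGrowth_coord_snd_snd :
    (fun w : H n => (w.2.2 : ℂ)).HasTemperateGrowth :=
  ((ContinuousLinearMap.snd ℝ (E n) ℝ).comp (.snd ℝ (E n) (E n × ℝ))).hasTemperateGrowth_ofReal_comp

theorem mul_conv1_eq_of_map_hmul {ι : Type*} (s : Finset ι) {a p q : H n → ℂ}
    {r t : ι → H n → ℂ} (hp : p.HasTemperateGrowth) (hq : q.HasTemperateGrowth)
    (hr : ∀ i, (r i).HasTemperateGrowth) (ht : ∀ i, (t i).HasTemperateGrowth)
    (ha : ∀ w v, a (hmul w v) = p w + q v + ∑ i ∈ s, r i w * t i v)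
    (f g : 𝓢(H n, ℂ)) (u : H n) :
    a u * conv1 f g u
      = conv1 (fun w => p w * f w) g u + conv1 f (fun w => q w * g w) u
        + ∑ i ∈ s, conv1 (fun w => r i w * f w) (fun w => t i w * g w) u := by
  have hpfg : Integrable fun v => p (hmul u (hinv v)) * f (hmul u (hinv v)) * g v :=
    integrable_conv1_integrand (f.exists_coe_eq_mul hp) ⟨g, rfl⟩ u
  have hfqg : Integrable fun v => f (hmul u (hinv v)) * (q v * g v) :=
    integrable_conv1_integrand ⟨f, rfl⟩ (g.exists_coe_eq_mul hq) u
  have hrftg : ∀ i ∈ s, Integrable fun v =>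
      r i (hmul u (hinv v)) * f (hmul u (hinv v)) * (t i v * g v) := fun i _ =>
    integrable_conv1_integrand (f.exists_coe_eq_mul (hr i)) (g.exists_coe_eq_mul (ht i)) u
  have hau : ∀ v, a u = p (hmul u (hinv v)) + q v + ∑ i ∈ s, r i (hmul u (hinv v)) * t i v :=
    fun v => by rw [← ha, hmul_hinv_cancel_right]
  simp only [conv1]
  rw [← integral_finsetSum _ hrftg, ← integral_add hpfg hfqg,
    ← integral_add (hpfg.fun_add hfqg) (integrable_finsetSum _ hrftg), ← integral_const_mul]
  congr 1 with v
  rw [hau v, add_mul, add_mul, Finset.sum_mul]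
  congr 1
  · ring
  · exact Finset.sum_congr rfl fun i _ => by ring

theorem mul_conv1_eq_of_map_hmul_eq_add {a : H n → ℂ} (ha_temp : a.HasTemperateGrowth)
    (ha : ∀ w v, a (hmul w v) = a w + a v) (f g : 𝓢(H n, ℂ)) (u : H n) :
    a u * conv1 f g u = conv1 (fun w => a w * f w) g u + conv1 f (fun w => a w * g w) u := by
  simpa using mul_conv1_eq_of_map_hmul (∅ : Finset Empty) ha_temp ha_temp
    (r := fun i => i.elim) (t := fun i => i.elim) (fun i => i.elim) (fun i => i.elim)
    (fun w v => by simpa using ha w v) f g u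

/-- For Schwartz `f, g` on `ℝ^{2n+1}`:
`T_{kj}(f *₁ g) = T_{kj}f *₁ g + f *₁ T_{kj}g` for `k = 1, 2`, `1 ≤ j ≤ n`, and
`T₃(f *₁ g) = T₃f *₁ g + f *₁ T₃g + Σ_j T_{1j}f *₁ T_{2j}g`. -/
theorem statement2 (n : ℕ) (f g : SchwartzMap (H n) ℂ) :
    (∀ j : Fin n, ∀ u : H n,
        (u.1 j : ℂ) * conv1 (⇑f) (⇑g) u
          = conv1 (fun w => (w.1 j : ℂ) * f w) (⇑g) u
            + conv1 (⇑f) (fun w => (w.1 j : ℂ) * g w) u) ∧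
    (∀ j : Fin n, ∀ u : H n,
        (u.2.1 j : ℂ) * conv1 (⇑f) (⇑g) u
          = conv1 (fun w => (w.2.1 j : ℂ) * f w) (⇑g) u
            + conv1 (⇑f) (fun w => (w.2.1 j : ℂ) * g w) u) ∧
    (∀ u : H n,
        (u.2.2 : ℂ) * conv1 (⇑f) (⇑g) u
          = conv1 (fun w => (w.2.2 : ℂ) * f w) (⇑g) u
            + conv1 (⇑f) (fun w => (w.2.2 : ℂ) * g w) u
            + ∑ j : Fin n,
                conv1 (fun w => (w.1 j : ℂ) * f w) (fun w => (w.2.1 j : ℂ) * g w) u) := by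
  refine ⟨fun j => ?_, fun j => ?_, ?_⟩
  · refine mul_conv1_eq_of_map_hmul_eq_add (hasTemperateGrowth_coord_fst j) (fun w v => ?_) f g
    simp [hmul]
  · refine mul_conv1_eq_of_map_hmul_eq_add (hasTemperateGrowth_coord_snd_fst j) (fun w v => ?_) f g
    simp [hmul]
  · refine mul_conv1_eq_of_map_hmul Finset.univ hasTemperateGrowth_coord_snd_snd
      hasTemperateGrowth_coord_snd_snd hasTemperateGrowth_coord_fst hasTemperateGrowth_coord_snd_fst
      (fun w v => ?_) f g
    rw [hmul_snd_snd]
    push_cast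
    rfl
end
end

section
/- For every multiindex γ = (γ₁,γ₂,γ₃) ∈ ℕⁿ×ℕⁿ×ℕ with γ ≠ 0 there exist real constants c_{αβ}, indexed by pairs of multiindices (α,β) with d(α)+d(β) = d(γ) and 0 < d(α) < d(γ), such that for all Schwartz functions f, g on ℝ^{2n+1}: T^γ(f *₁ g) = T^γf *₁ g + f *₁ T^γg + Σ_{d(α)+d(β)=d(γ), 0<d(α)<d(γ)} c_{αβ} T^αf *₁ T^βg. -/
open MeasureTheory Complex Topology Filter
open scoped RealInnerProductSpace ENNReal

noncomputable section

/-- Multiindices `γ = (γ₁, γ₂, γ₃) ∈ ℕⁿ × ℕⁿ × ℕ`. -/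
abbrev MIdx (n : ℕ) := (Fin n → ℕ) × (Fin n → ℕ) × ℕ

/-- Homogeneous length `d(γ) = |γ₁| + |γ₂| + 2γ₃`. -/
def hd {n : ℕ} (γ : MIdx n) : ℕ := (∑ j, γ.1 j) + (∑ j, γ.2.1 j) + 2 * γ.2.2

/-- The monomial `u₁^{γ₁} u₂^{γ₂} u₃^{γ₃}`. -/
def mono {n : ℕ} (γ : MIdx n) (u : H n) : ℝ :=
  (∏ j, u.1 j ^ γ.1 j) * (∏ j, u.2.1 j ^ γ.2.1 j) * u.2.2 ^ γ.2.2

/-!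
Give `u₁, u₂` weight 1 and `u₃` weight 2. The coordinates `w₁ + v₁`, `w₂ + v₂`,
`w₃ + v₃ + w₁ · v₂` of `w ∘ v` are homogeneous of weights 1, 1, 2 in `(w, v)`, so
`(w ∘ v)^γ = Σ c_{αβ} w^α v^β` with `d(α) + d(β) = d(γ)`; putting `w = 0` or `v = 0` shows that
the terms with `α = 0` or `β = 0` add up to `v^γ` and `w^γ`. Writing `u = (u ∘ v⁻¹) ∘ v` in the
convolution integral and integrating term by term (each `T^α f` is again Schwartz) gives the claim.
-/

namespace Heisenberg

variable {n : ℕ}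

theorem mono_zero (u : H n) : mono 0 u = 1 := by simp [mono]

theorem mono_add (a b : MIdx n) (u : H n) : mono (a + b) u = mono a u * mono b u := by
  simp only [mono, Prod.fst_add, Prod.snd_add, Pi.add_apply, pow_add, Finset.prod_mul_distrib]
  ring

theorem mono_apply_zero [DecidableEq (MIdx n)] (a : MIdx n) :
    mono a (0 : H n) = if a = 0 then 1 else 0 := by
  split_ifs with ha
  · rw [ha, mono_zero]
  · obtain ⟨a₁, a₂, a₃⟩ := a
    simp only [Prod.mk_eq_zero, funext_iff, Pi.zero_apply, not_and_or, not_forall] at ha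
    simpa [mono, Finset.prod_eq_zero_iff, or_assoc] using ha

theorem hd_zero : hd (0 : MIdx n) = 0 := by simp [hd]

theorem hd_add (a b : MIdx n) : hd (a + b) = hd a + hd b := by
  simp only [hd, Prod.fst_add, Prod.snd_add, Pi.add_apply, Finset.sum_add_distrib]
  ring

theorem hd_eq_zero_iff {a : MIdx n} : hd a = 0 ↔ a = 0 := by
  obtain ⟨a₁, a₂, a₃⟩ := a
  simp [hd, Finset.sum_eq_zero_iff, funext_iff, and_assoc]

theorem hmul_zero_left (v : H n) : hmul 0 v = v := by
  simp [hmul]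

theorem hmul_zero_right (w : H n) : hmul w 0 = w := by
  simp [hmul]

theorem hmul_hinv_cancel_right (u v : H n) : hmul (hmul u (hinv v)) v = u := by
  simp only [hmul, hinv, inner_add_left, inner_neg_left, inner_neg_right]
  ext <;> simp; ring

theorem inner_eq_sum_mul (x y : E n) : ⟪x, y⟫ = ∑ j, x j * y j := by
  simp [PiLp.inner_apply, mul_comm]

section Expansion

open AddMonoidAlgebra

/-- Polynomials in two points `w, v` of `H n`: the basis element at `(α, β)` stands for
`(w, v) ↦ mono α w * mono β v`. -/
abbrev BiPoly (n : ℕ) := AddMonoidAlgebra ℝ (MIdx n × MIdx n)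

def BiPoly.eval (w v : H n) : BiPoly n →ₐ[ℝ] ℝ :=
  lift ℝ ℝ (MIdx n × MIdx n)
    { toFun := fun p => mono p.toAdd.1 w * mono p.toAdd.2 v
      map_one' := by simp [mono_zero]
      map_mul' := fun p q => by simp only [toAdd_mul, Prod.fst_add, Prod.snd_add, mono_add]; ring }

theorem BiPoly.eval_single (w v : H n) (p : MIdx n × MIdx n) (r : ℝ) :
    BiPoly.eval w v (single p r) = r * (mono p.1 w * mono p.2 v) := by
  simp [BiPoly.eval, lift_single]

theorem BiPoly.eval_eq_sum (w v : H n) (P : BiPoly n) :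
    BiPoly.eval w v P = ∑ p ∈ P.coeff.support, P.coeff p * (mono p.1 w * mono p.2 v) := by
  simp [BiPoly.eval, AddMonoidAlgebra.lift_apply, Finsupp.sum]

def bidegree : MIdx n × MIdx n →+ ℕ where
  toFun p := hd p.1 + hd p.2
  map_zero' := by simp [hd_zero]
  map_add' p q := by simp only [Prod.fst_add, Prod.snd_add, hd_add]; ring

def unit₁ (j : Fin n) : MIdx n := (Pi.single j 1, 0, 0)

def unit₂ (j : Fin n) : MIdx n := (0, Pi.single j 1, 0)

def unit₃ : MIdx n := (0, 0, 1)

@[simp] theorem mono_unit₁ (j : Fin n) (u : H n) : mono (unit₁ j) u = u.1 j := by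
  simp [mono, unit₁, Pi.single_apply, pow_ite]

@[simp] theorem mono_unit₂ (j : Fin n) (u : H n) : mono (unit₂ j) u = u.2.1 j := by
  simp [mono, unit₂, Pi.single_apply, pow_ite]

@[simp] theorem mono_unit₃ (u : H n) : mono (unit₃ : MIdx n) u = u.2.2 := by
  simp [mono, unit₃]

def hmulPoly (γ : MIdx n) : BiPoly n :=
  (∏ j, (single (unit₁ j, 0) 1 + single (0, unit₁ j) 1) ^ γ.1 j) *
    (∏ j, (single (unit₂ j, 0) 1 + single (0, unit₂ j) 1) ^ γ.2.1 j) *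
    (single (unit₃, 0) 1 + single (0, unit₃) 1 + ∑ k, single (unit₁ k, unit₂ k) 1) ^ γ.2.2

theorem BiPoly.eval_hmulPoly (γ : MIdx n) (w v : H n) :
    BiPoly.eval w v (hmulPoly γ) = mono γ (hmul w v) := by
  simp only [hmulPoly, map_mul, map_prod, map_pow, map_add, map_sum, BiPoly.eval_single,
    mono_unit₁, mono_unit₂, mono_unit₃, mono_zero, one_mul, mul_one]
  simp only [mono, hmul, inner_eq_sum_mul, PiLp.add_apply]

theorem hmulPoly_mem_gradeBy (γ : MIdx n) : hmulPoly γ ∈ gradeBy ℝ bidegree (hd γ) := by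
  have hlin (a : MIdx n) (ha : hd a = 1) :
      single (a, 0) 1 + single (0, a) 1 ∈ gradeBy ℝ (bidegree : MIdx n × MIdx n → ℕ) 1 := by
    refine add_mem ?_ ?_ <;> convert single_mem_gradeBy _ _ _ <;> simp [bidegree, ha, hd_zero]
  have hquad : single (unit₃, 0) 1 + single (0, unit₃) 1 + ∑ k, single (unit₁ k, unit₂ k) 1 ∈
      gradeBy ℝ (bidegree : MIdx n × MIdx n → ℕ) 2 := by
    refine add_mem (add_mem ?_ ?_) (Submodule.sum_mem _ fun k _ => ?_) <;>
      convert single_mem_gradeBy _ _ _ <;> simp [bidegree, hd, unit₁, unit₂, unit₃]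
  have hmem := SetLike.mul_mem_graded (SetLike.mul_mem_graded
    (SetLike.prod_mem_graded _ _ _ (F := Finset.univ) fun j _ =>
      SetLike.pow_mem_graded (γ.1 j) (hlin (unit₁ j) (by simp [hd, unit₁])))
    (SetLike.prod_mem_graded _ _ _ (F := Finset.univ) fun j _ =>
      SetLike.pow_mem_graded (γ.2.1 j) (hlin (unit₂ j) (by simp [hd, unit₂]))))
    (SetLike.pow_mem_graded γ.2.2 hquad)
  unfold hmulPoly
  convert hmem using 2
  simp [hd, mul_comm]

theorem mono_mul_mono_eq [DecidableEq (MIdx n)] {p : MIdx n × MIdx n} (hp : p ≠ 0) (w v : H n) :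
    mono p.1 w * mono p.2 v = mono p.1 w * mono p.2 0 + mono p.1 0 * mono p.2 v +
      if p.1 ≠ 0 ∧ p.2 ≠ 0 then mono p.1 w * mono p.2 v else 0 := by
  obtain ⟨a, b⟩ := p
  simp only [mono_apply_zero]
  split_ifs <;> simp_all [mono_zero]

theorem BiPoly.eval_eq_add_add [DecidableEq (MIdx n)] {P : BiPoly n} (hP : P.coeff 0 = 0)
    (w v : H n) :
    BiPoly.eval w v P = BiPoly.eval w 0 P + BiPoly.eval 0 v P +
      ∑ p ∈ P.coeff.support with p.1 ≠ 0 ∧ p.2 ≠ 0, P.coeff p * (mono p.1 w * mono p.2 v) := by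
  simp only [BiPoly.eval_eq_sum, Finset.sum_filter, ← Finset.sum_add_distrib]
  refine Finset.sum_congr rfl fun p hp => ?_
  have hp0 : p ≠ 0 := by rintro rfl; exact Finsupp.mem_support_iff.mp hp hP
  conv_lhs => rw [mono_mul_mono_eq hp0]
  split_ifs <;> ring

theorem exists_mono_hmul_eq {γ : MIdx n} (hγ : γ ≠ 0) :
    ∃ (s : Finset (MIdx n × MIdx n)) (c : MIdx n × MIdx n → ℝ),
      (∀ p ∈ s, hd p.1 + hd p.2 = hd γ ∧ 0 < hd p.1 ∧ hd p.1 < hd γ) ∧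
      ∀ w v : H n, mono γ (hmul w v) =
        mono γ w + mono γ v + ∑ p ∈ s, c p * (mono p.1 w * mono p.2 v) := by
  classical
  set P := hmulPoly γ
  have hdeg (p) (hp : p ∈ P.coeff.support) : hd p.1 + hd p.2 = hd γ :=
    (mem_gradeBy_iff ℝ _ _ P).mp (hmulPoly_mem_gradeBy γ) hp
  have hP0 : P.coeff 0 = 0 := by
    by_contra h
    have := hdeg 0 (Finsupp.mem_support_iff.mpr h)
    exact hγ (hd_eq_zero_iff.mp (by simpa [hd_zero] using this.symm))
  refine ⟨P.coeff.support.filter fun p => p.1 ≠ 0 ∧ p.2 ≠ 0, P.coeff, ?_, fun w v => ?_⟩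
  · intro p hp
    obtain ⟨hp, h₁, h₂⟩ := Finset.mem_filter.mp hp
    rw [Ne, ← hd_eq_zero_iff] at h₁ h₂
    have := hdeg p hp
    omega
  · rw [← BiPoly.eval_hmulPoly, BiPoly.eval_eq_add_add hP0, BiPoly.eval_hmulPoly,
      BiPoly.eval_hmulPoly, hmul_zero_right, hmul_zero_left]

end Expansion

section Analysis

open scoped SchwartzMap

theorem _root_.Function.HasTemperateGrowth.prod {ι D R : Type*} [NormedAddCommGroup D]
    [NormedSpace ℝ D] [NormedCommRing R] [NormedAlgebra ℝ R] {f : ι → D → R} (s : Finset ι)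
    (hf : ∀ i ∈ s, (f i).HasTemperateGrowth) : (fun x => ∏ i ∈ s, f i x).HasTemperateGrowth := by
  classical
  induction s using Finset.induction_on with
  | empty => simp
  | insert a s has ih =>
    simp only [Finset.prod_insert has]
    exact (hf a (by simp)).mul (ih fun i hi => hf i (by simp [hi]))

theorem hasTemperateGrowth_mono (a : MIdx n) : (mono a).HasTemperateGrowth := by
  have h₁ (j : Fin n) : (fun u : H n => u.1 j).HasTemperateGrowth :=
    ((EuclideanSpace.proj j).comp (ContinuousLinearMap.fst ℝ (E n) (E n × ℝ))).hasTemperateGrowth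
  have h₂ (j : Fin n) : (fun u : H n => u.2.1 j).HasTemperateGrowth :=
    ((EuclideanSpace.proj j).comp ((ContinuousLinearMap.fst ℝ (E n) ℝ).comp
      (ContinuousLinearMap.snd ℝ (E n) (E n × ℝ)))).hasTemperateGrowth
  have h₃ : (fun u : H n => u.2.2).HasTemperateGrowth :=
    ((ContinuousLinearMap.snd ℝ (E n) ℝ).comp
      (ContinuousLinearMap.snd ℝ (E n) (E n × ℝ))).hasTemperateGrowth
  exact ((Function.HasTemperateGrowth.prod _ fun j _ => (h₁ j).pow _).mul
    (Function.HasTemperateGrowth.prod _ fun j _ => (h₂ j).pow _)).mul (h₃.pow _)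

theorem continuous_hmul_hinv (u : H n) : Continuous fun v : H n => hmul u (hinv v) := by
  unfold hmul hinv
  fun_prop

instance : (volume : Measure (H n)).IsAddHaarMeasure :=
  Measure.prod.instIsAddHaarMeasure (volume : Measure (E n))
    ((volume : Measure (E n)).prod (volume : Measure ℝ))

def monoMul (a : MIdx n) : 𝓢(H n, ℂ) →L[ℂ] 𝓢(H n, ℂ) :=
  SchwartzMap.smulLeftCLM ℂ fun u => (mono a u : ℂ)

theorem monoMul_apply (a : MIdx n) (f : 𝓢(H n, ℂ)) (u : H n) :
    monoMul a f u = mono a u * f u :=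
  SchwartzMap.smulLeftCLM_apply_apply
    (Complex.ofRealCLM.hasTemperateGrowth.comp (hasTemperateGrowth_mono a)) f u

theorem integrable_conv1_integrand (F G : 𝓢(H n, ℂ)) (u : H n) :
    Integrable fun v => F (hmul u (hinv v)) * G v :=
  G.integrable.bdd_mul (F.continuous.comp (continuous_hmul_hinv u)).aestronglyMeasurable
    (ae_of_all _ fun _ => F.norm_le_seminorm ℂ _)

end Analysis

end Heisenberg

/-- For every multiindex `γ ≠ 0` there are constants `c_{αβ}` (supported on pairs with
`d(α)+d(β) = d(γ)`, `0 < d(α) < d(γ)`) such that for all Schwartz `f, g`,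
`T^γ(f *₁ g) = T^γf *₁ g + f *₁ T^γg + Σ c_{αβ} T^αf *₁ T^βg`. -/
theorem statement3 (n : ℕ) (γ : MIdx n) (hγ : γ ≠ 0) :
    ∃ (s : Finset (MIdx n × MIdx n)) (c : MIdx n × MIdx n → ℝ),
      (∀ p ∈ s, hd p.1 + hd p.2 = hd γ ∧ 0 < hd p.1 ∧ hd p.1 < hd γ) ∧
      ∀ (f g : SchwartzMap (H n) ℂ) (u : H n),
        (mono γ u : ℂ) * conv1 (⇑f) (⇑g) u
          = conv1 (fun w => (mono γ w : ℂ) * f w) (⇑g) u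
            + conv1 (⇑f) (fun w => (mono γ w : ℂ) * g w) u
            + ∑ p ∈ s, (c p : ℂ) *
                conv1 (fun w => (mono p.1 w : ℂ) * f w)
                  (fun w => (mono p.2 w : ℂ) * g w) u := by
  obtain ⟨s, c, hs, hexp⟩ := Heisenberg.exists_mono_hmul_eq hγ
  refine ⟨s, c, hs, fun f g u => ?_⟩
  have hint (a b : MIdx n) := Heisenberg.integrable_conv1_integrand
    (Heisenberg.monoMul a f) (Heisenberg.monoMul b g) u
  simp only [Heisenberg.monoMul_apply] at hint
  have hintl := hint γ 0
  have hintr := hint 0 γ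
  simp only [Heisenberg.mono_zero, Complex.ofReal_one, one_mul] at hintl hintr
  have hints := integrable_finsetSum s fun p _ => (hint p.1 p.2).const_mul (c p : ℂ)
  simp only [conv1, ← integral_const_mul]
  rw [← integral_finsetSum _ fun p _ => (hint p.1 p.2).const_mul _, ← integral_add hintl hintr,
    ← integral_add (hintl.fun_add hintr) hints]
  refine integral_congr_ae (ae_of_all _ fun v => ?_)
  have hu := hexp (hmul u (hinv v)) v
  rw [Heisenberg.hmul_hinv_cancel_right] at hu
  simp only [hu, Complex.ofReal_add, Complex.ofReal_sum, Complex.ofReal_mul, add_mul, Finset.sum_mul]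
  congr 1
  · ring
  · exact Finset.sum_congr rfl fun _ _ => by ring
end
end

section
/- For every multiindex γ = (γ₁,γ₂,γ₃) ∈ ℕⁿ×ℕⁿ×ℕ with γ ≠ 0 there exist real constants c_{αβ}, indexed by pairs (α,β) with d(α)+d(β) = d(γ) and 0 < d(α) < d(γ), such that for all S-convolvers A, B on 𝕙ⁿ: each T^αA and T^βB is again an S-convolver, and T^γ(A *₁ B) = T^γA *₁ B + A *₁ T^γB + Σ_{d(α)+d(β)=d(γ), 0<d(α)<d(γ)} c_{αβ} T^αA *₁ T^βB. -/
open MeasureTheory Complex Topology Filter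
open scoped RealInnerProductSpace ENNReal

noncomputable section

/-- Tempered distributions on `ℝ^{2n+1}`. -/
abbrev TD (n : ℕ) := SchwartzMap (H n) ℂ →L[ℂ] ℂ

/-- The Euclidean pairing `x·ξ` on `ℝ^{2n+1}`. -/
def dotH {n : ℕ} (x ξ : H n) : ℝ := ⟪x.1, ξ.1⟫ + ⟪x.2.1, ξ.2.1⟫ + x.2.2 * ξ.2.2

/-- `LConvAt T f x c` says that `c = (T *₁ f)(x) = ⟨T, y ↦ f(y⁻¹ ∘ x)⟩`:
whenever a Schwartz function `ψ` has values `ψ(y) = f(y⁻¹ ∘ x)`, then `T ψ = c`. -/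
def LConvAt {n : ℕ} (T : TD n) (f : SchwartzMap (H n) ℂ) (x : H n) (c : ℂ) : Prop :=
  ∀ ψ : SchwartzMap (H n) ℂ, (∀ y, ψ y = f (hmul (hinv y) x)) → T ψ = c

/-- `RConvAt T f x c` says that `c = (f *₁ T)(x) = ⟨T, y ↦ f(x ∘ y⁻¹)⟩`. -/
def RConvAt {n : ℕ} (T : TD n) (f : SchwartzMap (H n) ℂ) (x : H n) (c : ℂ) : Prop :=
  ∀ ψ : SchwartzMap (H n) ℂ, (∀ y, ψ y = f (hmul x (hinv y))) → T ψ = c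

/-- `T` is an `S`-convolver on `𝕙ⁿ`: `T *₁ f` and `f *₁ T` are Schwartz for all Schwartz `f`. -/
def IsSConvolver {n : ℕ} (T : TD n) : Prop :=
  ∀ f : SchwartzMap (H n) ℂ,
    (∃ h : SchwartzMap (H n) ℂ, ∀ x, LConvAt T f x (h x)) ∧
    (∃ h : SchwartzMap (H n) ℂ, ∀ x, RConvAt T f x (h x))

/-- `ConvTD T S C` says that `C = T *₁ S` as tempered distributions:
`⟨T *₁ S, f⟩ = ⟨T, x ↦ ⟨S, y ↦ f(x ∘ y)⟩⟩`. -/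
def ConvTD {n : ℕ} (T S C : TD n) : Prop :=
  ∀ (f h : SchwartzMap (H n) ℂ),
    (∀ x, ∀ ψ : SchwartzMap (H n) ℂ, (∀ y, ψ y = f (hmul x y)) → h x = S ψ) →
    C f = T h

/-- The symbol class `S(m,g)` on `ℝ^{2n+1}`. -/
def InS {n : ℕ} (m g : H n → ℝ) (a : H n → ℂ) : Prop :=
  ContDiff ℝ (⊤ : ℕ∞) a ∧ ∀ k : ℕ, ∃ c : ℝ, 0 < c ∧ ∀ x : H n,
    ‖iteratedFDeriv ℝ k a x‖ ≤ c * m x * g x ^ (-(k : ℝ))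

/-- A weight function: continuous, `g ≥ 1`, and self-tempered. -/
def IsWeightFn {n : ℕ} (g : H n → ℝ) : Prop :=
  Continuous g ∧ (∀ x, 1 ≤ g x) ∧
  ∃ C M : ℝ, 0 < C ∧ 0 < M ∧ ∀ x y : H n,
    g x / g y ≤ C * (1 + ‖x - y‖ / g x) ^ M ∧
    g y / g x ≤ C * (1 + ‖x - y‖ / g x) ^ M

/-- A weight `m` for a weight function `g`. -/
def IsWeight {n : ℕ} (g m : H n → ℝ) : Prop :=
  (∀ x, 0 < m x) ∧
  ∃ C M : ℝ, 0 < C ∧ 0 < M ∧ ∀ x y : H n,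
    m x / m y ≤ C * (1 + ‖x - y‖ / g x) ^ M ∧
    m y / m x ≤ C * (1 + ‖x - y‖ / g x) ^ M

/-- `FourierRep T a` says that the Fourier transform of `T` (with the normalization
`𝓕φ(ξ) = ∫ φ(x) e^{-i x·ξ} dx`, extended by duality) is given by integration against `a`:
`⟨T, 𝓕φ⟩ = ∫ a φ` for every Schwartz `φ`. -/
def FourierRep {n : ℕ} (T : TD n) (a : H n → ℂ) : Prop :=
  ∀ (φ ψ : SchwartzMap (H n) ℂ),
    (∀ ξ, ψ ξ = ∫ x, Complex.exp (-Complex.I * ((dotH x ξ : ℝ) : ℂ)) * φ x) →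
    T ψ = ∫ ξ, a ξ * φ ξ

/-- The Fourier transform of an integrable function. -/
def fourierL1 {n : ℕ} (B : H n → ℂ) (ξ : H n) : ℂ :=
  ∫ x, Complex.exp (-Complex.I * ((dotH x ξ : ℝ) : ℂ)) * B x

/-- `MonoMulTD γ T T'` says that `T' = T^γ T`, i.e.
`⟨T' , f⟩ = ⟨T, u ↦ u₁^{γ₁}u₂^{γ₂}u₃^{γ₃} f(u)⟩` for all Schwartz `f`. -/
def MonoMulTD {n : ℕ} (γ : MIdx n) (T T' : TD n) : Prop :=
  ∀ (f ψ : SchwartzMap (H n) ℂ), (∀ u, ψ u = (mono γ u : ℂ) * f u) → T' f = T ψ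

section TG
open Function
section
variable {D E F G : Type*} [NormedAddCommGroup D] [NormedSpace ℝ D]
  [NormedAddCommGroup E] [NormedSpace ℝ E] [NormedAddCommGroup F] [NormedSpace ℝ F]

lemma tg_add {f g : D → E} (hf : f.HasTemperateGrowth) (hg : g.HasTemperateGrowth) :
    Function.HasTemperateGrowth (fun x => f x + g x) := by
  refine ⟨hf.1.add hg.1, fun n => ?_⟩
  obtain ⟨k1, C1, h1⟩ := hf.2 n
  obtain ⟨k2, C2, h2⟩ := hg.2 n
  refine ⟨k1 + k2, |C1| + |C2|, fun x => ?_⟩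
  have hx : (1:ℝ) ≤ 1 + ‖x‖ := by linarith [norm_nonneg x]
  have e : iteratedFDeriv ℝ n (fun y => f y + g y) x
      = iteratedFDeriv ℝ n f x + iteratedFDeriv ℝ n g x :=
    iteratedFDeriv_add_apply (hf.1.contDiffAt.of_le (by exact_mod_cast le_top))
      (hg.1.contDiffAt.of_le (by exact_mod_cast le_top))
  calc ‖iteratedFDeriv ℝ n (fun y => f y + g y) x‖
      ≤ ‖iteratedFDeriv ℝ n f x‖ + ‖iteratedFDeriv ℝ n g x‖ := by rw [e]; exact norm_add_le _ _
    _ ≤ C1 * (1 + ‖x‖) ^ k1 + C2 * (1 + ‖x‖) ^ k2 := add_le_add (h1 x) (h2 x)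
    _ ≤ |C1| * (1 + ‖x‖) ^ (k1+k2) + |C2| * (1 + ‖x‖) ^ (k1+k2) := by
        gcongr <;> first
          | exact le_abs_self _
          | simp [hx]
          | omega
    _ = (|C1| + |C2|) * (1 + ‖x‖) ^ (k1+k2) := by ring

lemma tg_clm_comp {f : D → E} (L : E →L[ℝ] F) (hf : f.HasTemperateGrowth) :
    Function.HasTemperateGrowth (fun x => L (f x)) := by
  refine ⟨L.contDiff.comp hf.1, fun n => ?_⟩
  obtain ⟨k, C, h⟩ := hf.2 n
  refine ⟨k, ‖L‖ * C, fun x => ?_⟩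
  have e := L.iteratedFDeriv_comp_left (x := x) hf.1.contDiffAt (i := n) (by exact_mod_cast le_top)
  rw [show ((fun x => L (f x)) = L ∘ f) from rfl, e]
  calc ‖L.compContinuousMultilinearMap (iteratedFDeriv ℝ n f x)‖
      ≤ ‖L‖ * ‖iteratedFDeriv ℝ n f x‖ := L.norm_compContinuousMultilinearMap_le _
    _ ≤ ‖L‖ * (C * (1 + ‖x‖) ^ k) := by gcongr ‖L‖ * ?_; exact h x
    _ = ‖L‖ * C * (1 + ‖x‖) ^ k := (mul_assoc _ _ _).symm

lemma tg_prodMk {f : D → E} {g : D → F} (hf : f.HasTemperateGrowth)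
    (hg : g.HasTemperateGrowth) : Function.HasTemperateGrowth (fun x => (f x, g x)) := by
  have h1 := tg_clm_comp (ContinuousLinearMap.inl ℝ E F) hf
  have h2 := tg_clm_comp (ContinuousLinearMap.inr ℝ E F) hg
  have := tg_add h1 h2
  simpa using this

variable {A : Type*} [NormedRing A] [NormedAlgebra ℝ A]

lemma tg_mul {f g : D → A} (hf : f.HasTemperateGrowth) (hg : g.HasTemperateGrowth) :
    Function.HasTemperateGrowth (fun x => f x * g x) := by
  refine ⟨hf.1.mul hg.1, fun n => ?_⟩
  obtain ⟨k1, C1, hC1, h1⟩ := Function.HasTemperateGrowth.norm_iteratedFDeriv_le_uniform hf n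
  obtain ⟨k2, C2, hC2, h2⟩ := Function.HasTemperateGrowth.norm_iteratedFDeriv_le_uniform hg n
  refine ⟨k1 + k2, (2:ℝ) ^ n * (C1 * C2), fun x => ?_⟩
  have hx : (1:ℝ) ≤ 1 + ‖x‖ := by linarith [norm_nonneg x]
  have key := norm_iteratedFDeriv_mul_le (𝕜 := ℝ) (hf.1.of_le (by exact_mod_cast le_top))
    (hg.1.of_le (by exact_mod_cast le_top)) x (le_refl (n : WithTop ℕ∞))
  refine key.trans ?_
  have : ∀ i ∈ Finset.range (n+1),
      (n.choose i : ℝ) * ‖iteratedFDeriv ℝ i f x‖ * ‖iteratedFDeriv ℝ (n-i) g x‖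
        ≤ (n.choose i : ℝ) * (C1 * C2 * (1 + ‖x‖) ^ (k1 + k2)) := by
    intro i hi
    rw [Finset.mem_range] at hi
    have b1 := h1 i (by omega) x
    have b2 := h2 (n - i) (by omega) x
    calc (n.choose i : ℝ) * ‖iteratedFDeriv ℝ i f x‖ * ‖iteratedFDeriv ℝ (n-i) g x‖
        ≤ (n.choose i : ℝ) * (C1 * (1 + ‖x‖) ^ k1) * (C2 * (1 + ‖x‖) ^ k2) := by
          gcongr <;> positivity
      _ = (n.choose i : ℝ) * (C1 * C2 * (1 + ‖x‖) ^ (k1 + k2)) := by rw [pow_add]; ring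
  refine (Finset.sum_le_sum this).trans ?_
  rw [← Finset.sum_mul]
  have hs : (∑ i ∈ Finset.range (n+1), (n.choose i : ℝ)) = 2 ^ n := by
    rw_mod_cast [Nat.sum_range_choose n]
  rw [hs]; ring_nf; rfl

lemma tg_pow {f : D → A} (hf : f.HasTemperateGrowth) (k : ℕ) :
    Function.HasTemperateGrowth (fun x => f x ^ k) := by
  induction k with
  | zero => simpa using Function.HasTemperateGrowth.const (1 : A)
  | succ m ih => simpa [pow_succ] using tg_mul ih hf

lemma tg_sum {ι : Type*} {t : Finset ι} {f : ι → D → E}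
    (h : ∀ i ∈ t, (f i).HasTemperateGrowth) :
    Function.HasTemperateGrowth (fun x => ∑ i ∈ t, f i x) := by
  classical
  induction t using Finset.induction with
  | empty => simpa using Function.HasTemperateGrowth.const (0 : E)
  | insert _ _ hi ih =>
    rename_i a s
    simp only [Finset.sum_insert hi]
    exact tg_add (h a (Finset.mem_insert_self a s))
      (ih (fun i hi' => h i (Finset.mem_insert_of_mem hi')))

variable {A' : Type*} [NormedCommRing A'] [NormedAlgebra ℝ A']
lemma tg_prod {ι : Type*} {t : Finset ι} {f : ι → D → A'}
    (h : ∀ i ∈ t, (f i).HasTemperateGrowth) :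
    Function.HasTemperateGrowth (fun x => ∏ i ∈ t, f i x) := by
  classical
  induction t using Finset.induction with
  | empty => simpa using Function.HasTemperateGrowth.const (1 : A')
  | insert _ _ hi ih =>
    rename_i a s
    simp only [Finset.prod_insert hi]
    exact tg_mul (h a (Finset.mem_insert_self a s))
      (ih (fun i hi' => h i (Finset.mem_insert_of_mem hi')))

end
namespace Stmt7
variable {n : ℕ}

-- ### Group lemmas
attribute [local simp] inner_add_left inner_add_right inner_neg_left inner_neg_right
  inner_zero_left inner_zero_right

lemma hmul_zero_left (y : H n) : hmul 0 y = y := by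
  simp [hmul, Prod.ext_iff]

lemma hmul_zero_right (x : H n) : hmul x 0 = x := by
  simp [hmul, Prod.ext_iff]

lemma hinv_hinv (x : H n) : hinv (hinv x) = x := by
  simp [hinv, Prod.ext_iff]

lemma hmul_inv_cancel_left (x y : H n) : hmul (hinv x) (hmul x y) = y := by
  simp only [hmul, hinv, Prod.ext_iff, Prod.fst_add, Prod.snd_add, Prod.fst_neg, Prod.snd_neg,
    inner_add_left, inner_add_right, inner_neg_left, inner_neg_right]
  refine ⟨by abel, by abel, by ring⟩

lemma hmul_inv_cancel_right (x y : H n) : hmul (hmul y x) (hinv x) = y := by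
  simp only [hmul, hinv, Prod.ext_iff, Prod.fst_add, Prod.snd_add, Prod.fst_neg, Prod.snd_neg,
    inner_add_left, inner_add_right, inner_neg_left, inner_neg_right]
  refine ⟨by abel, by abel, by ring⟩

lemma key_L (x y : H n) : hmul x (hinv (hmul (hinv y) x)) = y := by
  simp only [hmul, hinv, Prod.ext_iff, Prod.fst_add, Prod.snd_add, Prod.fst_neg, Prod.snd_neg,
    inner_add_left, inner_add_right, inner_neg_left, inner_neg_right]
  refine ⟨by abel, by abel, by ring⟩

lemma key_R (x y : H n) : hmul (hinv (hmul x (hinv y))) x = y := by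
  simp only [hmul, hinv, Prod.ext_iff, Prod.fst_add, Prod.snd_add, Prod.fst_neg, Prod.snd_neg,
    inner_add_left, inner_add_right, inner_neg_left, inner_neg_right]
  refine ⟨by abel, by abel, by ring⟩

lemma key_B (x y : H n) : hinv (hmul (hinv y) (hinv x)) = hmul x y := by
  simp only [hmul, hinv, Prod.ext_iff, Prod.fst_add, Prod.snd_add, Prod.fst_neg, Prod.snd_neg,
    inner_add_left, inner_add_right, inner_neg_left, inner_neg_right]
  refine ⟨by abel, by abel, by ring⟩


-- ### multiindex and monomial lemmas

lemma mono_zero_idx (u : H n) : mono (0 : MIdx n) u = 1 := by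
  simp [mono]

lemma hd_eq_zero_iff (p : MIdx n) : hd p = 0 ↔ p = 0 := by
  constructor
  · intro h
    unfold hd at h
    have h1 : ∑ j, p.1 j = 0 := by omega
    have h2 : ∑ j, p.2.1 j = 0 := by omega
    have h3 : p.2.2 = 0 := by omega
    rw [Finset.sum_eq_zero_iff] at h1 h2
    have e1 : p.1 = 0 := funext fun j => h1 j (Finset.mem_univ j)
    have e2 : p.2.1 = 0 := funext fun j => h2 j (Finset.mem_univ j)
    exact Prod.ext e1 (Prod.ext e2 h3)
  · rintro rfl; simp [hd]

lemma mono_at_zero {p : MIdx n} (hp : p ≠ 0) : mono p (0 : H n) = 0 := by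
  have hhd : hd p ≠ 0 := fun h => hp ((hd_eq_zero_iff p).1 h)
  unfold mono
  by_cases h3 : p.2.2 = 0
  · by_cases h1 : ∑ j, p.1 j = 0
    · have h2 : ∑ j, p.2.1 j ≠ 0 := by unfold hd at hhd; omega
      obtain ⟨j, _, hj'⟩ := Finset.exists_ne_zero_of_sum_ne_zero h2
      have hz : (∏ j, (0 : H n).2.1 j ^ p.2.1 j) = 0 :=
        Finset.prod_eq_zero (Finset.mem_univ j) (by simp [zero_pow hj'])
      rw [hz]; ring
    · obtain ⟨j, _, hj'⟩ := Finset.exists_ne_zero_of_sum_ne_zero h1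
      have hz : (∏ j, (0 : H n).1 j ^ p.1 j) = 0 :=
        Finset.prod_eq_zero (Finset.mem_univ j) (by simp [zero_pow hj'])
      rw [hz]; ring
  · have hz : ((0 : H n).2.2) ^ p.2.2 = 0 := by
      simp [zero_pow h3]
    rw [hz]; ring

lemma mono_add (p q : MIdx n) (u : H n) : mono (p + q) u = mono p u * mono q u := by
  unfold mono
  simp only [Prod.fst_add, Prod.snd_add, Pi.add_apply, pow_add, Finset.prod_mul_distrib]
  ring

lemma hd_add (p q : MIdx n) : hd (p + q) = hd p + hd q := by
  simp only [hd, Prod.fst_add, Prod.snd_add, Pi.add_apply, Finset.sum_add_distrib]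
  ring

/-- unit multiindices -/
def e1 (j : Fin n) : MIdx n := (Pi.single j 1, 0, 0)
def e2 (j : Fin n) : MIdx n := (0, Pi.single j 1, 0)
def e3 : MIdx n := (0, 0, 1)
def e12 (j : Fin n) : MIdx n := (Pi.single j 1, Pi.single j 1, 0)

lemma prod_single_pow (a : Fin n → ℝ) (j : Fin n) :
    (∏ i, a i ^ (Pi.single j (1 : ℕ) i)) = a j := by
  rw [Finset.prod_eq_single j]
  · simp
  · intro i _ hij
    rw [Pi.single_eq_of_ne hij]; simp
  · simp

lemma sum_single_one (j : Fin n) : (∑ i, Pi.single j (1 : ℕ) i) = 1 := by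
  rw [Finset.sum_eq_single j]
  · simp
  · intro i _ hij
    rw [Pi.single_eq_of_ne hij]
  · simp

lemma mono_e1 (j : Fin n) (u : H n) : mono (e1 j) u = u.1 j := by
  unfold mono e1; simp [prod_single_pow]
lemma mono_e2 (j : Fin n) (u : H n) : mono (e2 j) u = u.2.1 j := by
  unfold mono e2; simp [prod_single_pow]
lemma mono_e3 (u : H n) : mono (e3 : MIdx n) u = u.2.2 := by
  unfold mono e3; simp
lemma mono_e12 (j : Fin n) (u : H n) : mono (e12 j) u = u.1 j * u.2.1 j := by
  unfold mono e12; simp [prod_single_pow]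

lemma hd_e1 (j : Fin n) : hd (e1 j) = 1 := by simp [hd, e1, sum_single_one]
lemma hd_e2 (j : Fin n) : hd (e2 j) = 1 := by simp [hd, e2, sum_single_one]
lemma hd_e3 : hd (e3 : MIdx n) = 2 := by simp [hd, e3]
lemma hd_e12 (j : Fin n) : hd (e12 j) = 2 := by simp [hd, e12, sum_single_one]

-- ### graded polynomial-pair representations

/-- `F(x,y)` is a sum of terms `c · x^α y^β` with `d(α)+d(β) = d`. -/
def Mgrep (d : ℕ) (F : H n → H n → ℝ) : Prop :=
  ∃ (ι : Type) (t : Finset ι) (a b : ι → MIdx n) (c : ι → ℝ),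
    (∀ i ∈ t, hd (a i) + hd (b i) = d) ∧
    ∀ x y : H n, F x y = ∑ i ∈ t, c i * (mono (a i) x * mono (b i) y)

lemma Mgrep.congr {d : ℕ} {F G : H n → H n → ℝ} (h : Mgrep d F)
    (hFG : ∀ x y, G x y = F x y) : Mgrep d G := by
  obtain ⟨ι, t, a, b, c, h1, h2⟩ := h
  exact ⟨ι, t, a, b, c, h1, fun x y => (hFG x y).trans (h2 x y)⟩

lemma mgrep_single (a b : MIdx n) (r : ℝ) :
    Mgrep (hd a + hd b) (fun x y => r * (mono a x * mono b y)) := by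
  refine ⟨Unit, Finset.univ, fun _ => a, fun _ => b, fun _ => r, fun _ _ => rfl, fun x y => ?_⟩
  simp

lemma mgrep_gen (a b : MIdx n) (r : ℝ) {d : ℕ} (hab : hd a + hd b = d)
    {F : H n → H n → ℝ} (hF : ∀ x y, F x y = r * (mono a x * mono b y)) : Mgrep d F := by
  refine ⟨Unit, Finset.univ, fun _ => a, fun _ => b, fun _ => r, fun _ _ => hab, fun x y => ?_⟩
  simp [hF x y]

lemma mgrep_monoL (a : MIdx n) : Mgrep (hd a) (fun x _ => mono a x) :=
  mgrep_gen a 0 1 (by simp [hd]) (fun x y => by simp [mono_zero_idx])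

lemma mgrep_monoR (b : MIdx n) : Mgrep (hd b) (fun _ y => mono b y) :=
  mgrep_gen 0 b 1 (by simp [hd]) (fun x y => by simp [mono_zero_idx])

lemma mgrep_zero (d : ℕ) : Mgrep d (fun (_ _ : H n) => (0 : ℝ)) := by
  refine ⟨Unit, ∅, fun _ => 0, fun _ => 0, fun _ => 0, ?_, ?_⟩ <;> simp

lemma Mgrep.smul {d : ℕ} {F : H n → H n → ℝ} (r : ℝ) (h : Mgrep d F) :
    Mgrep d (fun x y => r * F x y) := by
  obtain ⟨ι, t, a, b, c, h1, h2⟩ := h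
  refine ⟨ι, t, a, b, fun i => r * c i, h1, fun x y => ?_⟩
  dsimp only
  rw [h2 x y, Finset.mul_sum]
  exact Finset.sum_congr rfl fun i _ => by ring

lemma Mgrep.add {d : ℕ} {F G : H n → H n → ℝ} (hF : Mgrep d F) (hG : Mgrep d G) :
    Mgrep d (fun x y => F x y + G x y) := by
  classical
  obtain ⟨ι1, t1, a1, b1, c1, h11, h12⟩ := hF
  obtain ⟨ι2, t2, a2, b2, c2, h21, h22⟩ := hG
  refine ⟨ι1 ⊕ ι2, t1.disjSum t2, Sum.elim a1 a2, Sum.elim b1 b2, Sum.elim c1 c2,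
    ?_, fun x y => ?_⟩
  · intro i hi
    rcases i with i | i
    · exact h11 i (by simpa using hi)
    · exact h21 i (by simpa using hi)
  · dsimp only
    rw [h12 x y, h22 x y, Finset.sum_disjSum]
    simp

lemma Mgrep.mul {d e : ℕ} {F G : H n → H n → ℝ} (hF : Mgrep d F) (hG : Mgrep e G) :
    Mgrep (d + e) (fun x y => F x y * G x y) := by
  classical
  obtain ⟨ι1, t1, a1, b1, c1, h11, h12⟩ := hF
  obtain ⟨ι2, t2, a2, b2, c2, h21, h22⟩ := hG
  refine ⟨ι1 × ι2, t1 ×ˢ t2, fun i => a1 i.1 + a2 i.2, fun i => b1 i.1 + b2 i.2,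
    fun i => c1 i.1 * c2 i.2, ?_, fun x y => ?_⟩
  · intro i hi
    rw [Finset.mem_product] at hi
    rw [hd_add, hd_add]
    have := h11 i.1 hi.1
    have := h21 i.2 hi.2
    omega
  · dsimp only
    rw [h12 x y, h22 x y, Finset.sum_mul_sum, Finset.sum_product]
    refine Finset.sum_congr rfl fun i _ => Finset.sum_congr rfl fun j _ => ?_
    rw [mono_add, mono_add]
    ring

lemma Mgrep.pow {d : ℕ} {F : H n → H n → ℝ} (h : Mgrep d F) (k : ℕ) :
    Mgrep (k * d) (fun x y => F x y ^ k) := by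
  induction k with
  | zero =>
    exact mgrep_gen 0 0 1 (by simp [hd]) (fun x y => by simp [mono_zero_idx])
  | succ m ih =>
    have := ih.mul h
    rw [show m * d + d = (m + 1) * d by ring] at this
    exact this.congr fun x y => by rw [pow_succ]

lemma mgrep_sum {ι' : Type*} {t : Finset ι'} {d : ℕ} {F : ι' → H n → H n → ℝ}
    (h : ∀ i ∈ t, Mgrep d (F i)) :
    Mgrep d (fun x y => ∑ i ∈ t, F i x y) := by
  classical
  induction t using Finset.induction with
  | empty => exact (mgrep_zero d).congr (by simp)
  | insert _ _ hi ih =>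
    rename_i a s
    have := (h a (Finset.mem_insert_self a s)).add
      (ih fun i hi' => h i (Finset.mem_insert_of_mem hi'))
    exact this.congr fun x y => by rw [Finset.sum_insert hi]

lemma mgrep_prod {ι' : Type*} {t : Finset ι'} {d : ι' → ℕ} {F : ι' → H n → H n → ℝ}
    (h : ∀ i ∈ t, Mgrep (d i) (F i)) :
    Mgrep (∑ i ∈ t, d i) (fun x y => ∏ i ∈ t, F i x y) := by
  classical
  induction t using Finset.induction with
  | empty =>
    simp only [Finset.sum_empty, Finset.prod_empty]
    exact mgrep_gen 0 0 1 (by simp [hd]) (fun x y => by simp [mono_zero_idx])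
  | insert _ _ hi ih =>
    rename_i a s
    rw [Finset.sum_insert hi]
    have := (h a (Finset.mem_insert_self a s)).mul
      (ih fun i hi' => h i (Finset.mem_insert_of_mem hi'))
    exact this.congr fun x y => by rw [Finset.prod_insert hi]

-- ### expansion of monomials composed with group operations

lemma inner_expand (u v : E n) : ⟪u, v⟫ = ∑ j, u j * v j := by
  simp [PiLp.inner_apply, RCLike.inner_apply, mul_comm]

lemma mgrep_mono_comp (γ : MIdx n) {g : H n → H n → H n}
    (h1 : ∀ j, Mgrep 1 (fun x y => (g x y).1 j))
    (h2 : ∀ j, Mgrep 1 (fun x y => (g x y).2.1 j))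
    (h3 : Mgrep 2 (fun x y => (g x y).2.2)) :
    Mgrep (hd γ) (fun x y => mono γ (g x y)) := by
  have P1 : Mgrep (∑ j, γ.1 j) (fun x y => ∏ j, (g x y).1 j ^ γ.1 j) := by
    have := mgrep_prod (t := Finset.univ) (d := fun j => γ.1 j * 1)
      (F := fun j x y => (g x y).1 j ^ γ.1 j) (fun j _ => (h1 j).pow (γ.1 j))
    simpa using this
  have P2 : Mgrep (∑ j, γ.2.1 j) (fun x y => ∏ j, (g x y).2.1 j ^ γ.2.1 j) := by
    have := mgrep_prod (t := Finset.univ) (d := fun j => γ.2.1 j * 1)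
      (F := fun j x y => (g x y).2.1 j ^ γ.2.1 j) (fun j _ => (h2 j).pow (γ.2.1 j))
    simpa using this
  have P3 : Mgrep (γ.2.2 * 2) (fun x y => (g x y).2.2 ^ γ.2.2) := h3.pow γ.2.2
  have := (P1.mul P2).mul P3
  rw [show (∑ j, γ.1 j) + (∑ j, γ.2.1 j) + γ.2.2 * 2 = hd γ from by unfold hd; ring] at this
  exact this.congr fun x y => by rw [mono]

lemma mg_xc1 (j : Fin n) : Mgrep 1 (fun x _ : H n => x.1 j) :=
  mgrep_gen (e1 j) 0 1 (by rw [hd_e1]; simp [hd]) (fun x y => by simp [mono_e1, mono_zero_idx])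
lemma mg_yc1 (j : Fin n) : Mgrep 1 (fun _ y : H n => y.1 j) :=
  mgrep_gen 0 (e1 j) 1 (by rw [hd_e1]; simp [hd]) (fun x y => by simp [mono_e1, mono_zero_idx])
lemma mg_xc2 (j : Fin n) : Mgrep 1 (fun x _ : H n => x.2.1 j) :=
  mgrep_gen (e2 j) 0 1 (by rw [hd_e2]; simp [hd]) (fun x y => by simp [mono_e2, mono_zero_idx])
lemma mg_yc2 (j : Fin n) : Mgrep 1 (fun _ y : H n => y.2.1 j) :=
  mgrep_gen 0 (e2 j) 1 (by rw [hd_e2]; simp [hd]) (fun x y => by simp [mono_e2, mono_zero_idx])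
lemma mg_xc3 : Mgrep 2 (fun x _ : H n => x.2.2) :=
  mgrep_gen e3 0 1 (by rw [hd_e3]; simp [hd]) (fun x y => by simp [mono_e3, mono_zero_idx])
lemma mg_yc3 : Mgrep 2 (fun _ y : H n => y.2.2) :=
  mgrep_gen 0 e3 1 (by rw [hd_e3]; simp [hd]) (fun x y => by simp [mono_e3, mono_zero_idx])

lemma mg_innerXY : Mgrep 2 (fun x y : H n => ⟪x.1, y.2.1⟫) := by
  refine (mgrep_sum (t := Finset.univ) (F := fun j (x y : H n) => x.1 j * y.2.1 j)
    (fun j _ => mgrep_gen (e1 j) (e2 j) 1 (by rw [hd_e1, hd_e2])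
      (fun x y => by simp [mono_e1, mono_e2]))).congr fun x y => inner_expand _ _
lemma mg_innerYX : Mgrep 2 (fun x y : H n => ⟪y.1, x.2.1⟫) := by
  refine (mgrep_sum (t := Finset.univ) (F := fun j (x y : H n) => y.1 j * x.2.1 j)
    (fun j _ => mgrep_gen (e2 j) (e1 j) 1 (by rw [hd_e1, hd_e2])
      (fun x y => by simp [mono_e1, mono_e2]; ring))).congr fun x y => inner_expand _ _
lemma mg_innerXX : Mgrep 2 (fun x _ : H n => ⟪x.1, x.2.1⟫) := by
  refine (mgrep_sum (t := Finset.univ) (F := fun j (x y : H n) => x.1 j * x.2.1 j)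
    (fun j _ => mgrep_gen (e12 j) 0 1 (by rw [hd_e12]; simp [hd])
      (fun x y => by simp [mono_e12, mono_zero_idx]))).congr fun x y => inner_expand _ _
lemma mg_innerYY : Mgrep 2 (fun _ y : H n => ⟪y.1, y.2.1⟫) := by
  refine (mgrep_sum (t := Finset.univ) (F := fun j (x y : H n) => y.1 j * y.2.1 j)
    (fun j _ => mgrep_gen 0 (e12 j) 1 (by rw [hd_e12]; simp [hd])
      (fun x y => by simp [mono_e12, mono_zero_idx]))).congr fun x y => inner_expand _ _

lemma expand_mul (γ : MIdx n) : Mgrep (hd γ) (fun x y : H n => mono γ (hmul x y)) := by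
  refine mgrep_mono_comp γ (fun j => ?_) (fun j => ?_) ?_
  · exact ((mg_xc1 j).add (mg_yc1 j)).congr (fun x y => by simp [hmul])
  · exact ((mg_xc2 j).add (mg_yc2 j)).congr (fun x y => by simp [hmul])
  · exact ((mg_xc3.add mg_yc3).add mg_innerXY).congr (fun x y => by simp [hmul])

lemma expand_R (γ : MIdx n) : Mgrep (hd γ) (fun x y : H n => mono γ (hmul x (hinv y))) := by
  refine mgrep_mono_comp γ (fun j => ?_) (fun j => ?_) ?_
  · exact ((mg_xc1 j).add ((mg_yc1 j).smul (-1))).congr (fun x y => by simp [hmul, hinv]; try ring)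
  · exact ((mg_xc2 j).add ((mg_yc2 j).smul (-1))).congr (fun x y => by simp [hmul, hinv]; try ring)
  · exact (((mg_xc3.add (mg_yc3.smul (-1))).add mg_innerYY).add (mg_innerXY.smul (-1))).congr
      (fun x y => by simp [hmul, hinv, inner_expand]; try ring)

lemma expand_L (γ : MIdx n) : Mgrep (hd γ) (fun x y : H n => mono γ (hmul (hinv y) x)) := by
  refine mgrep_mono_comp γ (fun j => ?_) (fun j => ?_) ?_
  · exact (((mg_yc1 j).smul (-1)).add (mg_xc1 j)).congr (fun x y => by simp [hmul, hinv]; try ring)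
  · exact (((mg_yc2 j).smul (-1)).add (mg_xc2 j)).congr (fun x y => by simp [hmul, hinv]; try ring)
  · exact ((((mg_yc3.smul (-1)).add mg_innerYY).add mg_xc3).add (mg_innerYX.smul (-1))).congr
      (fun x y => by simp [hmul, hinv, inner_expand]; try ring)

lemma expand_hY (γ : MIdx n) : Mgrep (hd γ) (fun x y : H n => mono γ (hmul (hinv x) y)) := by
  refine mgrep_mono_comp γ (fun j => ?_) (fun j => ?_) ?_
  · exact (((mg_xc1 j).smul (-1)).add (mg_yc1 j)).congr (fun x y => by simp [hmul, hinv]; try ring)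
  · exact (((mg_xc2 j).smul (-1)).add (mg_yc2 j)).congr (fun x y => by simp [hmul, hinv]; try ring)
  · exact ((((mg_xc3.smul (-1)).add mg_innerXX).add mg_yc3).add (mg_innerXY.smul (-1))).congr
      (fun x y => by simp [hmul, hinv, inner_expand]; try ring)

-- ### the strict expansion

lemma hd_zero' : hd (0 : MIdx n) = 0 := (hd_eq_zero_iff 0).2 rfl

lemma mgrep_pairform {d : ℕ} {F : H n → H n → ℝ} (h : Mgrep d F) :
    ∃ (S : Finset (MIdx n × MIdx n)) (C : MIdx n × MIdx n → ℝ),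
      (∀ p ∈ S, hd p.1 + hd p.2 = d) ∧
      ∀ x y, F x y = ∑ p ∈ S, C p * (mono p.1 x * mono p.2 y) := by
  classical
  obtain ⟨ι, t, a, b, c, h1, h2⟩ := h
  refine ⟨t.image (fun i => (a i, b i)),
    fun p => ∑ i ∈ t.filter (fun i => (a i, b i) = p), c i, ?_, fun x y => ?_⟩
  · intro p hp
    obtain ⟨i, hi, rfl⟩ := Finset.mem_image.1 hp
    exact h1 i hi
  · rw [h2 x y]
    rw [← Finset.sum_fiberwise_of_maps_to (g := fun i => (a i, b i))
      (fun i hi => Finset.mem_image_of_mem _ hi)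
      (fun i => c i * (mono (a i) x * mono (b i) y))]
    refine Finset.sum_congr rfl fun p hp => ?_
    rw [Finset.sum_mul]
    refine Finset.sum_congr rfl fun i hi => ?_
    have he : (a i, b i) = p := by simpa using (Finset.mem_filter.1 hi).2
    rw [← he]

lemma strict_expansion (γ : MIdx n) (hγ : γ ≠ 0) :
    ∃ (s : Finset (MIdx n × MIdx n)) (c : MIdx n × MIdx n → ℝ),
      (∀ p ∈ s, hd p.1 + hd p.2 = hd γ ∧ 0 < hd p.1 ∧ hd p.1 < hd γ) ∧
      ∀ x y, mono γ (hmul x y)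
        = mono γ x + mono γ y + ∑ p ∈ s, c p * (mono p.1 x * mono p.2 y) := by
  classical
  have hdγ : 0 < hd γ := Nat.pos_of_ne_zero (fun h => hγ ((hd_eq_zero_iff γ).1 h))
  obtain ⟨S, C, hS, hid⟩ := mgrep_pairform (expand_mul γ)
  set T := fun (x y : H n) (p : MIdx n × MIdx n) => C p * (mono p.1 x * mono p.2 y) with hT
  set S0 := S.filter (fun p => hd p.1 = 0) with hS0
  set S1 := (S.filter (fun p => ¬ hd p.1 = 0)).filter (fun p => hd γ ≤ hd p.1) with hS1
  set Smid := (S.filter (fun p => ¬ hd p.1 = 0)).filter (fun p => ¬ hd γ ≤ hd p.1) with hSmid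
  have splitS : ∀ x y : H n, (∑ p ∈ S, T x y p) =
      (∑ p ∈ S0, T x y p) + ((∑ p ∈ S1, T x y p) + (∑ p ∈ Smid, T x y p)) := by
    intro x y
    rw [hS1, hSmid, Finset.sum_filter_add_sum_filter_not
      (S.filter (fun p => ¬ hd p.1 = 0)) (fun p => hd γ ≤ hd p.1)]
    rw [hS0]
    exact (Finset.sum_filter_add_sum_filter_not S (fun p => hd p.1 = 0) _).symm
  -- memberships
  have memS0 : ∀ p ∈ S0, p ∈ S ∧ p.1 = 0 := by
    intro p hp
    have := Finset.mem_filter.1 hp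
    exact ⟨this.1, (hd_eq_zero_iff p.1).1 this.2⟩
  have memS1 : ∀ p ∈ S1, p ∈ S ∧ p.1 ≠ 0 ∧ p.2 = 0 := by
    intro p hp
    have h1 := Finset.mem_filter.1 hp
    have h2 := Finset.mem_filter.1 h1.1
    refine ⟨h2.1, fun e => h2.2 (by rw [e, hd_zero']), ?_⟩
    have := hS p h2.1
    have : hd p.2 = 0 := by omega
    exact (hd_eq_zero_iff p.2).1 this
  have memSmid : ∀ p ∈ Smid, p ∈ S ∧ p.1 ≠ 0 ∧ p.2 ≠ 0 := by
    intro p hp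
    have h1 := Finset.mem_filter.1 hp
    have h2 := Finset.mem_filter.1 h1.1
    refine ⟨h2.1, fun e => h2.2 (by rw [e, hd_zero']), fun e => ?_⟩
    have h3 := hS p h2.1
    have h4 : hd p.2 = 0 := by rw [e, hd_zero']
    exact h1.2 (by omega)
  -- the S0 sum equals mono γ y
  have hA0 : ∀ x y : H n, (∑ p ∈ S0, T x y p) = mono γ y := by
    have e1 : ∀ (x : H n) y, (∑ p ∈ S0, T x y p) = ∑ p ∈ S0, C p * mono p.2 y := by
      intro x y
      refine Finset.sum_congr rfl fun p hp => ?_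
      rw [hT]; dsimp only
      rw [(memS0 p hp).2, mono_zero_idx]; ring
    intro x y
    have e2 := hid 0 y
    rw [hmul_zero_left] at e2
    have v1 : (∑ p ∈ S1, T 0 y p) = 0 :=
      Finset.sum_eq_zero fun p hp => by
        rw [hT]; dsimp only
        rw [mono_at_zero (memS1 p hp).2.1]; ring
    have v2 : (∑ p ∈ Smid, T 0 y p) = 0 :=
      Finset.sum_eq_zero fun p hp => by
        rw [hT]; dsimp only
        rw [mono_at_zero (memSmid p hp).2.1]; ring
    have e4 := splitS 0 y
    rw [v1, v2] at e4
    have e5 : mono γ y = ∑ p ∈ S, T 0 y p := e2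
    rw [e1 x y, ← e1 0 y]
    linarith [e4, e5]
  -- the S1 sum equals mono γ x
  have hA1 : ∀ (x y : H n), (∑ p ∈ S1, T x y p) = mono γ x := by
    have e1 : ∀ (x y : H n), (∑ p ∈ S1, T x y p) = ∑ p ∈ S1, C p * mono p.1 x := by
      intro x y
      refine Finset.sum_congr rfl fun p hp => ?_
      rw [hT]; dsimp only
      rw [(memS1 p hp).2.2, mono_zero_idx]; ring
    intro x y
    have e2 := hid x 0
    rw [hmul_zero_right] at e2
    have v1 : (∑ p ∈ S0, T x 0 p) = 0 :=
      Finset.sum_eq_zero fun p hp => by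
        have h2 : hd p.2 = hd γ := by
          have := hS p (memS0 p hp).1
          have e0 : hd p.1 = 0 := by rw [(memS0 p hp).2, hd_zero']
          omega
        have : p.2 ≠ 0 := fun e => hdγ.ne' (by rw [← h2, e, hd_zero'])
        rw [hT]; dsimp only
        rw [mono_at_zero this]; ring
    have v2 : (∑ p ∈ Smid, T x 0 p) = 0 :=
      Finset.sum_eq_zero fun p hp => by
        rw [hT]; dsimp only
        rw [mono_at_zero (memSmid p hp).2.2]; ring
    have e4 := splitS x 0
    rw [v1, v2] at e4
    have e5 : mono γ x = ∑ p ∈ S, T x 0 p := e2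
    rw [e1 x y, ← e1 x 0]
    linarith [e4, e5]
  refine ⟨Smid, C, ?_, fun x y => ?_⟩
  · intro p hp
    have h1 := Finset.mem_filter.1 hp
    have h2 := Finset.mem_filter.1 h1.1
    have h3 := hS p h2.1
    have h4 : hd p.1 ≠ 0 := h2.2
    have h5 : ¬ hd γ ≤ hd p.1 := h1.2
    exact ⟨h3, by omega, by omega⟩
  · have := splitS x y
    rw [hA0 x y, hA1 x y] at this
    rw [hid x y, this]
    ring

-- ### temperate growth of the group maps

open Function in
lemma tg_congr {D F : Type*} [NormedAddCommGroup D] [NormedSpace ℝ D]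
    [NormedAddCommGroup F] [NormedSpace ℝ F] {f g : D → F}
    (h : f.HasTemperateGrowth) (e : ∀ x, g x = f x) : g.HasTemperateGrowth := by
  have : g = f := funext e
  rw [this]; exact h

lemma tg_hmul_left (x : H n) : Function.HasTemperateGrowth (fun y : H n => hmul x y) := by
  have c1 : Function.HasTemperateGrowth (fun y : H n => x.1 + y.1) :=
    tg_add (Function.HasTemperateGrowth.const x.1)
      (ContinuousLinearMap.fst ℝ (E n) (E n × ℝ)).hasTemperateGrowth
  have c2 : Function.HasTemperateGrowth (fun y : H n => x.2.1 + y.2.1) :=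
    tg_add (Function.HasTemperateGrowth.const x.2.1)
      ((ContinuousLinearMap.fst ℝ (E n) ℝ).comp
        (ContinuousLinearMap.snd ℝ (E n) (E n × ℝ))).hasTemperateGrowth
  have c3 : Function.HasTemperateGrowth (fun y : H n => x.2.2 + y.2.2 + ⟪x.1, y.2.1⟫) := by
    refine tg_add (tg_add (Function.HasTemperateGrowth.const x.2.2) ?_) ?_
    · exact ((ContinuousLinearMap.snd ℝ (E n) ℝ).comp
        (ContinuousLinearMap.snd ℝ (E n) (E n × ℝ))).hasTemperateGrowth
    · exact ((innerSL ℝ x.1).comp ((ContinuousLinearMap.fst ℝ (E n) ℝ).comp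
        (ContinuousLinearMap.snd ℝ (E n) (E n × ℝ)))).hasTemperateGrowth
  exact tg_congr (tg_prodMk c1 (tg_prodMk c2 c3)) (fun y => rfl)

lemma tg_hmul_right (x : H n) : Function.HasTemperateGrowth (fun y : H n => hmul y x) := by
  have c1 : Function.HasTemperateGrowth (fun y : H n => y.1 + x.1) :=
    tg_add (ContinuousLinearMap.fst ℝ (E n) (E n × ℝ)).hasTemperateGrowth
      (Function.HasTemperateGrowth.const x.1)
  have c2 : Function.HasTemperateGrowth (fun y : H n => y.2.1 + x.2.1) :=
    tg_add ((ContinuousLinearMap.fst ℝ (E n) ℝ).comp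
        (ContinuousLinearMap.snd ℝ (E n) (E n × ℝ))).hasTemperateGrowth
      (Function.HasTemperateGrowth.const x.2.1)
  have c3 : Function.HasTemperateGrowth (fun y : H n => y.2.2 + x.2.2 + ⟪y.1, x.2.1⟫) := by
    refine tg_add (tg_add ?_ (Function.HasTemperateGrowth.const x.2.2)) ?_
    · exact ((ContinuousLinearMap.snd ℝ (E n) ℝ).comp
        (ContinuousLinearMap.snd ℝ (E n) (E n × ℝ))).hasTemperateGrowth
    · exact tg_congr ((innerSL ℝ x.2.1).comp
        (ContinuousLinearMap.fst ℝ (E n) (E n × ℝ))).hasTemperateGrowth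
        (fun y => real_inner_comm _ _)
  exact tg_congr (tg_prodMk c1 (tg_prodMk c2 c3)) (fun y => rfl)

lemma tg_hinv : Function.HasTemperateGrowth (fun y : H n => hinv y) := by
  have c1 : Function.HasTemperateGrowth (fun y : H n => -y.1) :=
    (-(ContinuousLinearMap.fst ℝ (E n) (E n × ℝ))).hasTemperateGrowth
  have c2 : Function.HasTemperateGrowth (fun y : H n => -y.2.1) :=
    (-((ContinuousLinearMap.fst ℝ (E n) ℝ).comp
      (ContinuousLinearMap.snd ℝ (E n) (E n × ℝ)))).hasTemperateGrowth
  have c3 : Function.HasTemperateGrowth (fun y : H n => -y.2.2 + ⟪y.1, y.2.1⟫) := by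
    refine tg_add ?_ ?_
    · exact (-((ContinuousLinearMap.snd ℝ (E n) ℝ).comp
        (ContinuousLinearMap.snd ℝ (E n) (E n × ℝ)))).hasTemperateGrowth
    · refine tg_congr (tg_sum (t := Finset.univ)
        (f := fun j (y : H n) => y.1 j * y.2.1 j) (fun j _ => ?_)) (fun y => inner_expand _ _)
      exact tg_mul ((EuclideanSpace.proj j).comp
          (ContinuousLinearMap.fst ℝ (E n) (E n × ℝ))).hasTemperateGrowth
        ((EuclideanSpace.proj j).comp ((ContinuousLinearMap.fst ℝ (E n) ℝ).comp
          (ContinuousLinearMap.snd ℝ (E n) (E n × ℝ)))).hasTemperateGrowth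
  exact tg_congr (tg_prodMk c1 (tg_prodMk c2 c3)) (fun y => rfl)

lemma tg_monoC (δ : MIdx n) :
    Function.HasTemperateGrowth (fun x : H n => ((mono δ x : ℝ) : ℂ)) := by
  have base1 : ∀ j : Fin n, Function.HasTemperateGrowth (fun x : H n => ((x.1 j : ℝ) : ℂ)) :=
    fun j => (Complex.ofRealCLM.comp ((EuclideanSpace.proj j).comp
      (ContinuousLinearMap.fst ℝ (E n) (E n × ℝ)))).hasTemperateGrowth
  have base2 : ∀ j : Fin n, Function.HasTemperateGrowth (fun x : H n => ((x.2.1 j : ℝ) : ℂ)) :=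
    fun j => (Complex.ofRealCLM.comp ((EuclideanSpace.proj j).comp
      ((ContinuousLinearMap.fst ℝ (E n) ℝ).comp
        (ContinuousLinearMap.snd ℝ (E n) (E n × ℝ))))).hasTemperateGrowth
  have base3 : Function.HasTemperateGrowth (fun x : H n => ((x.2.2 : ℝ) : ℂ)) :=
    (Complex.ofRealCLM.comp ((ContinuousLinearMap.snd ℝ (E n) ℝ).comp
      (ContinuousLinearMap.snd ℝ (E n) (E n × ℝ)))).hasTemperateGrowth
  have P1 : Function.HasTemperateGrowth (fun x : H n => ∏ j, ((x.1 j : ℝ) : ℂ) ^ δ.1 j) :=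
    tg_prod (fun j _ => tg_pow (base1 j) (δ.1 j))
  have P2 : Function.HasTemperateGrowth (fun x : H n => ∏ j, ((x.2.1 j : ℝ) : ℂ) ^ δ.2.1 j) :=
    tg_prod (fun j _ => tg_pow (base2 j) (δ.2.1 j))
  have P3 : Function.HasTemperateGrowth (fun x : H n => ((x.2.2 : ℝ) : ℂ) ^ δ.2.2) :=
    tg_pow base3 δ.2.2
  refine tg_congr (tg_mul (tg_mul P1 P2) P3) (fun x => ?_)
  rw [mono]
  push_cast
  ring

-- ### norm bounds

lemma norm_fst_le' (u : H n) : ‖u.1‖ ≤ ‖u‖ := norm_fst_le u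
lemma norm_snd1_le' (u : H n) : ‖u.2.1‖ ≤ ‖u‖ := (norm_fst_le u.2).trans (norm_snd_le u)
lemma norm_snd2_le' (u : H n) : |u.2.2| ≤ ‖u‖ := by
  have := (norm_snd_le u.2).trans (norm_snd_le u)
  simpa using this

lemma aux_bound {A Z W : ℝ} (hA : 0 ≤ A) (hZ : 0 ≤ Z) (hW : W ≤ A + Z + A * Z) :
    W ≤ (1 + A) ^ 2 * (1 + Z) ^ 2 := by
  nlinarith [mul_nonneg hA hZ, mul_nonneg (mul_nonneg hA hA) hZ,
    mul_nonneg (mul_nonneg hA hZ) hZ, mul_nonneg (mul_nonneg (mul_nonneg hA hA) hZ) hZ,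
    mul_nonneg hA hA, mul_nonneg hZ hZ]

lemma norm_hmul_le (a z : H n) : ‖hmul a z‖ ≤ (1 + ‖a‖) ^ 2 * (1 + ‖z‖) ^ 2 := by
  have ha := norm_nonneg a; have hz := norm_nonneg z
  have ha1 := norm_fst_le' a; have hz1 := norm_fst_le' z
  have ha2 := norm_snd1_le' a; have hz2 := norm_snd1_le' z
  have ha3 := norm_snd2_le' a; have hz3 := norm_snd2_le' z
  have hi := abs_real_inner_le_norm a.1 z.2.1
  rw [show hmul a z = (a.1 + z.1, a.2.1 + z.2.1, a.2.2 + z.2.2 + ⟪a.1, z.2.1⟫) from rfl]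
  rw [Prod.norm_def, Prod.norm_def]
  refine max_le ?_ (max_le ?_ ?_)
  · refine (norm_add_le _ _).trans (aux_bound ha hz ?_)
    nlinarith [mul_nonneg ha hz]
  · refine (norm_add_le _ _).trans (aux_bound ha hz ?_)
    nlinarith [mul_nonneg ha hz]
  · have h1 : |a.2.2 + z.2.2 + ⟪a.1, z.2.1⟫| ≤ |a.2.2| + |z.2.2| + |⟪a.1, z.2.1⟫| :=
      (abs_add_le _ _).trans (by gcongr; exact abs_add_le _ _)
    refine h1.trans (aux_bound ha hz ?_)
    have h2 : |⟪a.1, z.2.1⟫| ≤ ‖a‖ * ‖z‖ := hi.trans (by gcongr)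
    linarith

lemma norm_hinv_le (z : H n) : ‖hinv z‖ ≤ (1 + ‖z‖) ^ 2 := by
  have hz := norm_nonneg z
  have hz1 := norm_fst_le' z
  have hz2 := norm_snd1_le' z
  have hz3 := norm_snd2_le' z
  have hi := abs_real_inner_le_norm z.1 z.2.1
  rw [show hinv z = (-z.1, -z.2.1, -z.2.2 + ⟪z.1, z.2.1⟫) from rfl]
  rw [Prod.norm_def, Prod.norm_def]
  refine max_le ?_ (max_le ?_ ?_)
  · rw [norm_neg]; nlinarith [mul_nonneg hz hz]
  · rw [norm_neg]; nlinarith [mul_nonneg hz hz]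
  · have h1 : |-z.2.2 + ⟪z.1, z.2.1⟫| ≤ |z.2.2| + |⟪z.1, z.2.1⟫| := by
      refine (abs_add_le _ _).trans (by rw [abs_neg])
    refine h1.trans ?_
    have h2 : |⟪z.1, z.2.1⟫| ≤ ‖z‖ * ‖z‖ := hi.trans (by gcongr)
    nlinarith [mul_nonneg hz hz]

lemma upper_hinv : ∃ (k : ℕ) (C : ℝ), ∀ y : H n, ‖y‖ ≤ C * (1 + ‖hinv y‖) ^ k := by
  refine ⟨2, 1, fun y => ?_⟩
  have := norm_hinv_le (hinv y)
  rw [hinv_hinv] at this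
  linarith

lemma upper_hmul_left (x : H n) :
    ∃ (k : ℕ) (C : ℝ), ∀ y : H n, ‖y‖ ≤ C * (1 + ‖hmul x y‖) ^ k := by
  refine ⟨2, (1 + ‖hinv x‖) ^ 2, fun y => ?_⟩
  have := norm_hmul_le (hinv x) (hmul x y)
  rw [hmul_inv_cancel_left] at this
  linarith

lemma upper_hmul_right (x : H n) :
    ∃ (k : ℕ) (C : ℝ), ∀ y : H n, ‖y‖ ≤ C * (1 + ‖hmul y x‖) ^ k := by
  refine ⟨2, (1 + ‖hinv x‖) ^ 2, fun y => ?_⟩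
  have := norm_hmul_le (hmul y x) (hinv x)
  rw [hmul_inv_cancel_right] at this
  calc ‖y‖ ≤ (1 + ‖hmul y x‖) ^ 2 * (1 + ‖hinv x‖) ^ 2 := this
    _ = (1 + ‖hinv x‖) ^ 2 * (1 + ‖hmul y x‖) ^ 2 := by ring

-- ### the operators

/-- composition with `hinv`. -/
noncomputable def cInv : SchwartzMap (H n) ℂ →L[ℂ] SchwartzMap (H n) ℂ :=
  SchwartzMap.compCLM ℂ tg_hinv upper_hinv

@[simp] lemma cInv_apply (f : SchwartzMap (H n) ℂ) (x : H n) : cInv f x = f (hinv x) := rfl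

/-- composition with left translation. -/
noncomputable def cL (x : H n) : SchwartzMap (H n) ℂ →L[ℂ] SchwartzMap (H n) ℂ :=
  SchwartzMap.compCLM ℂ (tg_hmul_left x) (upper_hmul_left x)

@[simp] lemma cL_apply (x : H n) (f : SchwartzMap (H n) ℂ) (y : H n) :
    cL x f y = f (hmul x y) := rfl

/-- composition with right translation. -/
noncomputable def cR (x : H n) : SchwartzMap (H n) ℂ →L[ℂ] SchwartzMap (H n) ℂ :=
  SchwartzMap.compCLM ℂ (tg_hmul_right x) (upper_hmul_right x)

@[simp] lemma cR_apply (x : H n) (f : SchwartzMap (H n) ℂ) (y : H n) :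
    cR x f y = f (hmul y x) := rfl

/-- multiplication by the monomial `mono δ`. -/
noncomputable def mm (δ : MIdx n) : SchwartzMap (H n) ℂ →L[ℝ] SchwartzMap (H n) ℂ :=
  SchwartzMap.bilinLeftCLM (ContinuousLinearMap.mul ℝ ℂ).flip (tg_monoC δ)

@[simp] lemma mm_apply (δ : MIdx n) (f : SchwartzMap (H n) ℂ) (x : H n) :
    mm δ f x = ((mono δ x : ℝ) : ℂ) * f x := rfl

-- ### convolution helpers

lemma monoMul_apply {δ : MIdx n} {T T' : TD n} (h : MonoMulTD δ T T')
    (g : SchwartzMap (H n) ℂ) : T' g = T (mm δ g) :=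
  h g (mm δ g) (fun u => by rw [mm_apply])

lemma schwartz_ext {f g : SchwartzMap (H n) ℂ} (h : ∀ x, f x = g x) : f = g :=
  DFunLike.ext f g h

lemma schwartz_sum_apply {ι : Type*} (t : Finset ι) (f : ι → SchwartzMap (H n) ℂ) (x : H n) :
    (∑ i ∈ t, f i) x = ∑ i ∈ t, f i x := by
  classical
  induction t using Finset.induction with
  | empty => simp
  | insert _ _ hi ih =>
    rename_i a s
    simp [Finset.sum_insert hi, SchwartzMap.add_apply, ih]

/-- From an S-convolver `B`, get a Schwartz `h` with `h x = ⟨B, y ↦ g(x∘y)⟩`. -/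
lemma exists_conv {B : TD n} (hB : IsSConvolver B) (g : SchwartzMap (H n) ℂ) :
    ∃ h : SchwartzMap (H n) ℂ, ∀ (x : H n) (ψ : SchwartzMap (H n) ℂ),
      (∀ y, ψ y = g (hmul x y)) → B ψ = h x := by
  obtain ⟨h₁, hh₁⟩ := (hB (cInv g)).1
  refine ⟨cInv h₁, fun x ψ hψ => ?_⟩
  have key := hh₁ (hinv x) ψ (fun y => by rw [hψ y, cInv_apply, key_B])
  rw [key, cInv_apply]

/-- From an S-convolver `B`, get a Schwartz `h` with `h x = ⟨B, y ↦ mono δ y · f(x∘y)⟩`. -/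
lemma exists_convMono {B : TD n} (hB : IsSConvolver B) (δ : MIdx n) (f : SchwartzMap (H n) ℂ) :
    ∃ h : SchwartzMap (H n) ℂ, ∀ (x : H n) (ψ : SchwartzMap (H n) ℂ),
      (∀ y, ψ y = ((mono δ y : ℝ) : ℂ) * f (hmul x y)) → B ψ = h x := by
  classical
  obtain ⟨ι, t, a, b, c, hdeg, hrep⟩ := expand_hY δ
  choose hh hhspec using fun i => exists_conv hB (mm (b i) f)
  refine ⟨∑ i ∈ t, ((c i : ℝ) : ℂ) • mm (a i) (hh i), fun x ψ hψ => ?_⟩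
  have hψeq : ψ = ∑ i ∈ t, ((c i : ℝ) : ℂ) • (((mono (a i) x : ℝ) : ℂ) • cL x (mm (b i) f)) := by
    apply schwartz_ext; intro y
    rw [hψ y, schwartz_sum_apply]
    have e1 : mono δ y = ∑ i ∈ t, c i * (mono (a i) x * mono (b i) (hmul x y)) := by
      have := hrep x (hmul x y)
      dsimp only at this
      rw [hmul_inv_cancel_left] at this
      exact this
    rw [e1]
    push_cast
    rw [Finset.sum_mul]
    refine Finset.sum_congr rfl fun i _ => ?_
    simp only [SchwartzMap.smul_apply, cL_apply, mm_apply, smul_eq_mul, Pi.smul_apply]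
    ring
  rw [hψeq, map_sum]
  rw [schwartz_sum_apply]
  refine Finset.sum_congr rfl fun i hi => ?_
  rw [_root_.map_smul, _root_.map_smul]
  have := hhspec i x (cL x (mm (b i) f)) (fun y => rfl)
  rw [this]
  simp only [SchwartzMap.smul_apply, mm_apply, smul_eq_mul]
  try ring

/-- monomial multiples of S-convolvers are S-convolvers. -/
lemma sconv_mono {A A' : TD n} (hA : IsSConvolver A) (δ : MIdx n)
    (h : MonoMulTD δ A A') : IsSConvolver A' := by
  classical
  intro f
  constructor
  · obtain ⟨ι, t, a, b, c, hdeg, hrep⟩ := expand_R δ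
    choose hh hhspec using fun i => (hA (mm (b i) f)).1
    refine ⟨∑ i ∈ t, ((c i : ℝ) : ℂ) • mm (a i) (hh i), fun x ψ hψ => ?_⟩
    rw [monoMul_apply h ψ]
    have hψeq : mm δ ψ
        = ∑ i ∈ t, ((c i : ℝ) : ℂ) • (((mono (a i) x : ℝ) : ℂ) • cInv (cR x (mm (b i) f))) := by
      apply schwartz_ext; intro y
      rw [mm_apply, hψ y, schwartz_sum_apply]
      have e1 : mono δ y = ∑ i ∈ t, c i * (mono (a i) x * mono (b i) (hmul (hinv y) x)) := by
        have := hrep x (hmul (hinv y) x)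
        dsimp only at this
        rw [key_L] at this
        exact this
      rw [e1]
      push_cast
      rw [Finset.sum_mul]
      refine Finset.sum_congr rfl fun i _ => ?_
      simp only [SchwartzMap.smul_apply, cInv_apply, cR_apply, mm_apply, smul_eq_mul, Pi.smul_apply]
      ring
    rw [hψeq, map_sum, schwartz_sum_apply]
    refine Finset.sum_congr rfl fun i hi => ?_
    rw [_root_.map_smul, _root_.map_smul]
    have := hhspec i x (cInv (cR x (mm (b i) f))) (fun y => rfl)
    rw [this]
    simp only [SchwartzMap.smul_apply, mm_apply, smul_eq_mul]
    try ring
  · obtain ⟨ι, t, a, b, c, hdeg, hrep⟩ := expand_L δ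
    choose hh hhspec using fun i => (hA (mm (b i) f)).2
    refine ⟨∑ i ∈ t, ((c i : ℝ) : ℂ) • mm (a i) (hh i), fun x ψ hψ => ?_⟩
    rw [monoMul_apply h ψ]
    have hψeq : mm δ ψ
        = ∑ i ∈ t, ((c i : ℝ) : ℂ) • (((mono (a i) x : ℝ) : ℂ) • cInv (cL x (mm (b i) f))) := by
      apply schwartz_ext; intro y
      rw [mm_apply, hψ y, schwartz_sum_apply]
      have e1 : mono δ y = ∑ i ∈ t, c i * (mono (a i) x * mono (b i) (hmul x (hinv y))) := by
        have := hrep x (hmul x (hinv y))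
        dsimp only at this
        rw [key_R] at this
        exact this
      rw [e1]
      push_cast
      rw [Finset.sum_mul]
      refine Finset.sum_congr rfl fun i _ => ?_
      simp only [SchwartzMap.smul_apply, cInv_apply, cL_apply, mm_apply, smul_eq_mul, Pi.smul_apply]
      ring
    rw [hψeq, map_sum, schwartz_sum_apply]
    refine Finset.sum_congr rfl fun i hi => ?_
    rw [_root_.map_smul, _root_.map_smul]
    have := hhspec i x (cInv (cL x (mm (b i) f))) (fun y => rfl)
    rw [this]
    simp only [SchwartzMap.smul_apply, mm_apply, smul_eq_mul]
    try ring

end Stmt7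

open Stmt7

/-- **Leibniz-type formula for `S`-convolvers on `𝕙ⁿ`.** For every multiindex `γ ≠ 0`
there are constants `c_{αβ}` (on pairs with `d(α)+d(β) = d(γ)`, `0 < d(α) < d(γ)`) such
that for all `S`-convolvers `A, B`: the monomial multiples `T^αA`, `T^βB` occurring are
again `S`-convolvers, and
`T^γ(A *₁ B) = T^γA *₁ B + A *₁ T^γB + Σ c_{αβ} T^αA *₁ T^βB`. -/
theorem statement7 (n : ℕ) (γ : MIdx n) (hγ : γ ≠ 0) :
    ∃ (s : Finset (MIdx n × MIdx n)) (c : MIdx n × MIdx n → ℝ),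
      (∀ p ∈ s, hd p.1 + hd p.2 = hd γ ∧ 0 < hd p.1 ∧ hd p.1 < hd γ) ∧
      ∀ (A B : TD n), IsSConvolver A → IsSConvolver B →
        (∀ A' : TD n, MonoMulTD γ A A' → IsSConvolver A') ∧
        (∀ B' : TD n, MonoMulTD γ B B' → IsSConvolver B') ∧
        (∀ p ∈ s, ∀ A' : TD n, MonoMulTD p.1 A A' → IsSConvolver A') ∧
        (∀ p ∈ s, ∀ B' : TD n, MonoMulTD p.2 B B' → IsSConvolver B') ∧
        (∀ (AB ABγ Aγ Bγ X Y : TD n) (CP : MIdx n × MIdx n → TD n),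
          ConvTD A B AB → MonoMulTD γ AB ABγ →
          MonoMulTD γ A Aγ → MonoMulTD γ B Bγ →
          ConvTD Aγ B X → ConvTD A Bγ Y →
          (∀ p ∈ s, ∃ Ap Bp : TD n,
            MonoMulTD p.1 A Ap ∧ MonoMulTD p.2 B Bp ∧ ConvTD Ap Bp (CP p)) →
          ∀ f : SchwartzMap (H n) ℂ,
            ABγ f = X f + Y f + ∑ p ∈ s, (c p : ℂ) * CP p f) := by
  classical
  obtain ⟨s, c, hs, hexp⟩ := strict_expansion γ hγ
  refine ⟨s, c, hs, ?_⟩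
  intro A B hA hB
  refine ⟨fun A' hA' => sconv_mono hA γ hA', fun B' hB' => sconv_mono hB γ hB',
    fun p _ A' hA' => sconv_mono hA p.1 hA', fun p _ B' hB' => sconv_mono hB p.2 hB', ?_⟩
  intro AB ABγ Aγ Bγ X Y CP hConvAB hABγ hAγ hBγ hX hY hCP f
  obtain ⟨h₀, hh₀⟩ := exists_conv hB f
  obtain ⟨hYf, hhY⟩ := exists_convMono hB γ f
  choose hYp hhYp using fun p : MIdx n × MIdx n => exists_convMono hB p.2 f
  obtain ⟨h₂, hh₂⟩ := exists_conv hB (mm γ f)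
  have eL : ABγ f = A h₂ := by
    rw [monoMul_apply hABγ f]
    exact hConvAB (mm γ f) h₂ (fun x ψ hψ => (hh₂ x ψ hψ).symm)
  have eX : X f = A (mm γ h₀) := by
    have e : X f = Aγ h₀ := hX f h₀ (fun x ψ hψ => (hh₀ x ψ hψ).symm)
    rw [e, monoMul_apply hAγ]
  have eY : Y f = A hYf := by
    refine hY f hYf (fun x ψ hψ => ?_)
    rw [monoMul_apply hBγ ψ]
    exact (hhY x (mm γ ψ) (fun y => by rw [mm_apply, hψ y])).symm
  have eCP : ∀ p ∈ s, CP p f = A (mm p.1 (hYp p)) := by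
    intro p hp
    obtain ⟨Ap, Bp, hAp, hBp, hCp⟩ := hCP p hp
    have e : CP p f = Ap (hYp p) := by
      refine hCp f (hYp p) (fun x ψ hψ => ?_)
      rw [monoMul_apply hBp ψ]
      exact (hhYp p x (mm p.2 ψ) (fun y => by rw [mm_apply, hψ y])).symm
    rw [e, monoMul_apply hAp]
  have hkey : h₂ = mm γ h₀ + hYf + ∑ p ∈ s, ((c p : ℝ) : ℂ) • mm p.1 (hYp p) := by
    apply schwartz_ext
    intro x
    have e0 : h₂ x = B (cL x (mm γ f)) := (hh₂ x (cL x (mm γ f)) (fun y => rfl)).symm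
    have edec : cL x (mm γ f)
        = ((mono γ x : ℝ) : ℂ) • cL x f + mm γ (cL x f)
          + ∑ p ∈ s, ((c p : ℝ) : ℂ) • (((mono p.1 x : ℝ) : ℂ) • mm p.2 (cL x f)) := by
      apply schwartz_ext; intro y
      simp only [SchwartzMap.add_apply, SchwartzMap.smul_apply, cL_apply, mm_apply,
        smul_eq_mul, schwartz_sum_apply]
      rw [hexp x y]
      push_cast
      rw [add_mul, add_mul, Finset.sum_mul]
      congr 1
      refine Finset.sum_congr rfl fun p _ => ?_
      ring
    have e1 : B (cL x f) = h₀ x := hh₀ x (cL x f) (fun y => rfl)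
    have e2 : B (mm γ (cL x f)) = hYf x :=
      hhY x (mm γ (cL x f)) (fun y => by rw [mm_apply, cL_apply])
    have e3 : ∀ p, B (mm p.2 (cL x f)) = hYp p x :=
      fun p => hhYp p x (mm p.2 (cL x f)) (fun y => by rw [mm_apply, cL_apply])
    rw [e0, edec, map_add, map_add, _root_.map_smul, map_sum]
    simp only [SchwartzMap.add_apply, SchwartzMap.smul_apply, mm_apply, smul_eq_mul,
      schwartz_sum_apply, e1, e2]
    congr 1
    refine Finset.sum_congr rfl fun p _ => ?_
    rw [_root_.map_smul, _root_.map_smul, e3 p]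
    simp [smul_eq_mul]
  rw [eL, hkey, map_add, map_add, map_sum, ← eX, ← eY]
  congr 1
  refine Finset.sum_congr rfl fun p hp => ?_
  rw [_root_.map_smul, eCP p hp]
  simp [smul_eq_mul]
end TG
end
end

section
/- Let A, B be S-convolvers on 𝕙ⁿ with A *₁ B = B *₁ A = δ₀ (the Dirac delta at 0). Then for k ∈ {1,2} and 1 ≤ j ≤ n: T_{kj}B = −B *₁ (T_{kj}A) *₁ B, and moreover T₃B = −B *₁ (T₃A) *₁ B − Σ_{j=1}^n B *₁ (T_{1j}A) *₁ (T_{2j}B). -/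
open MeasureTheory Complex Topology Filter
open scoped RealInnerProductSpace ENNReal

noncomputable section

/-- The multiindex for the coordinate `u_{1j}`. -/
def e1idx {n : ℕ} (j : Fin n) : MIdx n := (Pi.single j 1, 0, 0)

/-- The multiindex for the coordinate `u_{2j}`. -/
def e2idx {n : ℕ} (j : Fin n) : MIdx n := (0, Pi.single j 1, 0)

/-- The multiindex for the coordinate `u₃`. -/
def e3idx {n : ℕ} : MIdx n := (0, 0, 1)

variable {n : ℕ}

def p1 (n : ℕ) : H n →L[ℝ] E n := ContinuousLinearMap.fst ℝ (E n) (E n × ℝ)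
def p2 (n : ℕ) : H n →L[ℝ] E n :=
  (ContinuousLinearMap.fst ℝ (E n) ℝ).comp (ContinuousLinearMap.snd ℝ (E n) (E n × ℝ))
def p3 (n : ℕ) : H n →L[ℝ] ℝ :=
  (ContinuousLinearMap.snd ℝ (E n) ℝ).comp (ContinuousLinearMap.snd ℝ (E n) (E n × ℝ))
def Jm (n : ℕ) : ℝ →L[ℝ] H n :=
  (0 : ℝ →L[ℝ] E n).prod ((0 : ℝ →L[ℝ] E n).prod (ContinuousLinearMap.id ℝ ℝ))
@[simp] lemma p1_apply (u : H n) : p1 n u = u.1 := rfl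
@[simp] lemma p2_apply (u : H n) : p2 n u = u.2.1 := rfl
@[simp] lemma p3_apply (u : H n) : p3 n u = u.2.2 := rfl
@[simp] lemma Jm_apply (t : ℝ) : Jm n t = (0, 0, t) := rfl
def Phi (n : ℕ) : H n →L[ℝ] H n →L[ℝ] ℝ :=
  (((((innerSL ℝ).comp (p1 n))).flip.comp (p2 n))).flip
@[simp] lemma Phi_apply (u v : H n) : Phi n u v = ⟪u.1, v.2.1⟫ := rfl

-- component norm bounds
lemma norm_le_three (u : H n) (a : ℝ) (h1 : ‖u.1‖ ≤ a) (h2 : ‖u.2.1‖ ≤ a) (h3 : ‖u.2.2‖ ≤ a) :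
    ‖u‖ ≤ a := by
  rw [Prod.norm_def]
  exact max_le h1 (by rw [Prod.norm_def]; exact max_le h2 h3)

lemma norm_fst_le' (u : H n) : ‖u.1‖ ≤ ‖u‖ := norm_fst_le u
lemma norm_snd_fst_le (u : H n) : ‖u.2.1‖ ≤ ‖u‖ := (norm_fst_le u.2).trans (norm_snd_le u)
lemma norm_snd_snd_le (u : H n) : ‖u.2.2‖ ≤ ‖u‖ := (norm_snd_le u.2).trans (norm_snd_le u)

lemma norm_hmul_le (a z : H n) : ‖hmul a z‖ ≤ (1 + ‖a‖) * (1 + ‖z‖) := by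
  have ha1 := norm_fst_le' a; have ha2 := norm_snd_fst_le a; have ha3 := norm_snd_snd_le a
  have hz1 := norm_fst_le' z; have hz2 := norm_snd_fst_le z; have hz3 := norm_snd_snd_le z
  have hna : (0:ℝ) ≤ ‖a‖ := norm_nonneg _
  have hnz : (0:ℝ) ≤ ‖z‖ := norm_nonneg _
  refine norm_le_three _ _ ?_ ?_ ?_
  · refine (norm_add_le _ _).trans ?_; nlinarith
  · refine (norm_add_le _ _).trans ?_; nlinarith
  · show ‖a.2.2 + z.2.2 + ⟪a.1, z.2.1⟫‖ ≤ _
    refine (norm_add_le _ _).trans ?_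
    have hi : ‖⟪a.1, z.2.1⟫‖ ≤ ‖a.1‖ * ‖z.2.1‖ := by
      rw [Real.norm_eq_abs]; exact abs_real_inner_le_norm _ _
    have := (norm_add_le a.2.2 z.2.2)
    have : ‖a.1‖ * ‖z.2.1‖ ≤ ‖a‖ * ‖z‖ := by
      apply mul_le_mul ha1 hz2 (norm_nonneg _) hna
    nlinarith [norm_add_le a.2.2 z.2.2, norm_nonneg a.1, norm_nonneg z.2.1]

lemma norm_hinv_le (z : H n) : ‖hinv z‖ ≤ (1 + ‖z‖) ^ 2 := by
  have hz1 := norm_fst_le' z; have hz2 := norm_snd_fst_le z; have hz3 := norm_snd_snd_le z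
  have hnz : (0:ℝ) ≤ ‖z‖ := norm_nonneg _
  refine norm_le_three _ _ ?_ ?_ ?_
  · rw [show (hinv z).1 = -z.1 from rfl, norm_neg]; nlinarith
  · rw [show (hinv z).2.1 = -z.2.1 from rfl, norm_neg]; nlinarith
  · show ‖-z.2.2 + ⟪z.1, z.2.1⟫‖ ≤ _
    refine (norm_add_le _ _).trans ?_
    rw [norm_neg]
    have hi : ‖⟪z.1, z.2.1⟫‖ ≤ ‖z.1‖ * ‖z.2.1‖ := by
      rw [Real.norm_eq_abs]; exact abs_real_inner_le_norm _ _
    nlinarith [norm_nonneg z.1, norm_nonneg z.2.1,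
      mul_le_mul hz1 hz2 (norm_nonneg z.2.1) hnz]

lemma hmul_assoc (x y z : H n) : hmul (hmul x y) z = hmul x (hmul y z) := by
  simp only [hmul, Prod.mk.injEq]
  refine ⟨by abel, by abel, ?_⟩
  simp [inner_add_left, inner_add_right]; ring

lemma hmul_zero (x : H n) : hmul x 0 = x := by simp [hmul]

lemma hinv_hinv (x : H n) : hinv (hinv x) = x := by simp [hinv, inner_neg_neg]

lemma hinv_hmul (x y : H n) : hinv (hmul x y) = hmul (hinv y) (hinv x) := by
  simp only [hmul, hinv, Prod.mk.injEq, inner_add_left, inner_add_right, inner_neg_left,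
    inner_neg_right]
  refine ⟨by abel, by abel, by ring⟩

lemma hmul_left_cancel (x y : H n) : hmul (hinv x) (hmul x y) = y := by
  simp only [hmul, hinv, inner_add_right, inner_neg_left]
  refine Prod.ext (neg_add_cancel_left _ _) (Prod.ext (neg_add_cancel_left _ _) (by ring))

section htg
variable {V W : Type*} [NormedAddCommGroup V] [NormedSpace ℝ V]
  [NormedAddCommGroup W] [NormedSpace ℝ W]

lemma htg_affine (c : W) (L : V →L[ℝ] W) :
    Function.HasTemperateGrowth (fun y : V => c + L y) := by
  have hd : (fderiv ℝ fun y : V => c + L y) = fun _ => L := by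
    funext y
    rw [fderiv_const_add, L.fderiv]
  refine Function.HasTemperateGrowth.of_fderiv ?_ ?_ (k := 1) (C := ‖c‖ + ‖L‖) ?_
  · rw [hd]; exact .const L
  · exact (differentiable_const c).add L.differentiable
  · intro x
    have h1 : ‖c + L x‖ ≤ ‖c‖ + ‖L‖ * ‖x‖ :=
      (norm_add_le _ _).trans (by gcongr; exact L.le_opNorm x)
    have h2 : (0:ℝ) ≤ ‖c‖ := norm_nonneg _
    have h3 : (0:ℝ) ≤ ‖L‖ := norm_nonneg _
    have h4 : (0:ℝ) ≤ ‖x‖ := norm_nonneg _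
    nlinarith [h1]

lemma htg_quad (c : W) (L : V →L[ℝ] W) (Q : V →L[ℝ] V →L[ℝ] W) :
    Function.HasTemperateGrowth (fun y : V => c + L y + Q y y) := by
  have hder : ∀ y : V, HasFDerivAt (fun y : V => c + L y + Q y y)
      (L + (Q y + Q.flip y)) y := by
    intro y
    have h1 : HasFDerivAt (fun y : V => c + L y) L y := by
      exact L.hasFDerivAt.const_add c
    have h2 : HasFDerivAt (fun y : V => Q y y) (Q y + Q.flip y) y := by
      have := HasFDerivAt.clm_apply (c := fun y : V => Q y) (Q.hasFDerivAt (x := y))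
        (hasFDerivAt_id y)
      convert this using 1 <;> simp
    exact h1.add h2
  have hd : (fderiv ℝ fun y : V => c + L y + Q y y) =
      fun y => L + ((Q + Q.flip) y) := by
    funext y
    rw [(hder y).fderiv]
    simp
  refine Function.HasTemperateGrowth.of_fderiv ?_ ?_ (k := 2) (C := ‖c‖ + ‖L‖ + ‖Q‖) ?_
  · rw [hd]; exact htg_affine L (Q + Q.flip)
  · exact fun y => (hder y).differentiableAt
  · intro x
    have ha : ‖c + L x + Q x x‖ ≤ ‖c + L x‖ + ‖Q x x‖ := norm_add_le _ _
    have hb : ‖c + L x‖ ≤ ‖c‖ + ‖L x‖ := norm_add_le _ _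
    have hc1 : ‖L x‖ ≤ ‖L‖ * ‖x‖ := L.le_opNorm x
    have hd1 : ‖Q x x‖ ≤ ‖Q x‖ * ‖x‖ := (Q x).le_opNorm x
    have he : ‖Q x‖ ≤ ‖Q‖ * ‖x‖ := Q.le_opNorm x
    have h2 : (0:ℝ) ≤ ‖c‖ := norm_nonneg _
    have h3 : (0:ℝ) ≤ ‖L‖ := norm_nonneg _
    have h4 : (0:ℝ) ≤ ‖x‖ := norm_nonneg _
    have h5 : (0:ℝ) ≤ ‖Q‖ := ContinuousLinearMap.opNorm_nonneg Q
    have h1 : ‖c + L x + Q x x‖ ≤ ‖c‖ + ‖L‖ * ‖x‖ + ‖Q‖ * ‖x‖ * ‖x‖ := by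
      have : ‖Q x x‖ ≤ ‖Q‖ * ‖x‖ * ‖x‖ :=
        hd1.trans (by nlinarith [ContinuousLinearMap.opNorm_nonneg (Q x)])
      linarith
    nlinarith [h1, sq_nonneg ‖x‖, mul_nonneg h3 h4, mul_nonneg h5 h4,
      mul_nonneg (mul_nonneg h5 h4) h4]

end htg

lemma htg_hmul (x : H n) : Function.HasTemperateGrowth (fun y : H n => hmul x y) := by
  have : (fun y : H n => hmul x y) = fun y : H n =>
      x + (ContinuousLinearMap.id ℝ (H n) +
        (Jm n).comp (((innerSL ℝ) x.1).comp (p2 n))) y + (0 : H n →L[ℝ] H n →L[ℝ] H n) y y := by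
    funext y
    simp only [ContinuousLinearMap.add_apply, ContinuousLinearMap.coe_id', id_eq,
      ContinuousLinearMap.comp_apply, ContinuousLinearMap.zero_apply, add_zero]
    simp [hmul, Prod.ext_iff, Prod.fst_sum, Prod.snd_sum, add_assoc]
  rw [this]
  exact htg_quad _ _ _

lemma htg_hinv : Function.HasTemperateGrowth (fun y : H n => hinv y) := by
  have : (fun y : H n => hinv y) = fun y : H n =>
      (0 : H n) + (-(ContinuousLinearMap.id ℝ (H n))) y +
        (((ContinuousLinearMap.compL ℝ (H n) ℝ (H n)) (Jm n)).comp (Phi n)) y y := by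
    funext y
    simp only [ContinuousLinearMap.neg_apply, ContinuousLinearMap.coe_id', id_eq,
      ContinuousLinearMap.comp_apply, ContinuousLinearMap.compL_apply, zero_add]
    simp [hinv, Prod.ext_iff, Prod.fst_sum, Prod.snd_sum, add_assoc]
  rw [this]
  exact htg_quad _ _ _

lemma upper_hmul (x : H n) : ∃ (k : ℕ) (C : ℝ), ∀ y : H n, ‖y‖ ≤ C * (1 + ‖hmul x y‖) ^ k := by
  refine ⟨1, 1 + ‖hinv x‖, fun y => ?_⟩
  have := norm_hmul_le (hinv x) (hmul x y)
  rw [hmul_left_cancel] at this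
  simpa using this

lemma upper_hinv : ∃ (k : ℕ) (C : ℝ), ∀ y : H n, ‖y‖ ≤ C * (1 + ‖hinv y‖) ^ k := by
  refine ⟨2, 1, fun y => ?_⟩
  have := norm_hinv_le (hinv y)
  rw [hinv_hinv] at this
  simpa using this

/-- Right translation `f ↦ (y ↦ f (x ∘ y))` on Schwartz space. -/
def rho (x : H n) : SchwartzMap (H n) ℂ →L[ℝ] SchwartzMap (H n) ℂ :=
  SchwartzMap.compCLM ℝ (htg_hmul x) (upper_hmul x)

@[simp] lemma rho_apply (x : H n) (f : SchwartzMap (H n) ℂ) (y : H n) :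
    rho x f y = f (hmul x y) := rfl

/-- Composition with inversion on Schwartz space. -/
def icomp : SchwartzMap (H n) ℂ →L[ℝ] SchwartzMap (H n) ℂ :=
  SchwartzMap.compCLM ℝ htg_hinv upper_hinv

@[simp] lemma icomp_apply (f : SchwartzMap (H n) ℂ) (y : H n) : icomp f y = f (hinv y) := rfl

/-- Multiplication by a real linear coordinate functional on Schwartz space. -/
def cmul (c : H n →L[ℝ] ℝ) : SchwartzMap (H n) ℂ →L[ℝ] SchwartzMap (H n) ℂ :=
  SchwartzMap.bilinLeftCLM
    ((ContinuousLinearMap.lsmul ℝ ℝ : ℝ →L[ℝ] ℂ →L[ℝ] ℂ).flip) c.hasTemperateGrowth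

@[simp] lemma cmul_apply (c : H n →L[ℝ] ℝ) (f : SchwartzMap (H n) ℂ) (u : H n) :
    cmul c f u = (c u : ℂ) * f u := by
  show (c u) • (f u) = (c u : ℂ) * f u
  rw [Complex.real_smul]

/-- coordinate functionals -/
def c1 (n : ℕ) (j : Fin n) : H n →L[ℝ] ℝ := (EuclideanSpace.proj j).comp (p1 n)
def c2 (n : ℕ) (j : Fin n) : H n →L[ℝ] ℝ := (EuclideanSpace.proj j).comp (p2 n)
def c3 (n : ℕ) : H n →L[ℝ] ℝ := p3 n

@[simp] lemma c1_apply (j : Fin n) (u : H n) : c1 n j u = u.1 j := rfl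
@[simp] lemma c2_apply (j : Fin n) (u : H n) : c2 n j u = u.2.1 j := rfl
@[simp] lemma c3_apply (u : H n) : c3 n u = u.2.2 := rfl

lemma c1_hmul (j : Fin n) (x y : H n) : c1 n j (hmul x y) = c1 n j x + c1 n j y := by
  simp [hmul]
lemma c2_hmul (j : Fin n) (x y : H n) : c2 n j (hmul x y) = c2 n j x + c2 n j y := by
  simp [hmul]
lemma c3_hmul (x y : H n) :
    c3 n (hmul x y) = x.2.2 + y.2.2 + ∑ j, x.1 j * y.2.1 j := by
  simp only [c3_apply, hmul]
  rw [PiLp.inner_apply]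
  simp [RCLike.inner_apply]
  exact Finset.sum_congr rfl fun _ _ => mul_comm _ _


lemma prod_single_pow (v : Fin n → ℝ) (j : Fin n) :
    (∏ i, v i ^ (Pi.single j 1 : Fin n → ℕ) i) = v j := by
  rw [Finset.prod_eq_single j]
  · simp
  · intro i _ hij
    simp [Pi.single_eq_of_ne hij]
  · simp

@[simp] lemma mono_e1 (j : Fin n) (u : H n) : mono (e1idx j) u = u.1 j := by
  simp [mono, e1idx, prod_single_pow]
@[simp] lemma mono_e2 (j : Fin n) (u : H n) : mono (e2idx j) u = u.2.1 j := by
  simp [mono, e2idx, prod_single_pow]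
@[simp] lemma mono_e3 (u : H n) : mono (e3idx : MIdx n) u = u.2.2 := by
  simp [mono, e3idx]


/-- If `T *₁ g` is always Schwartz, then `x ↦ ⟨T, y ↦ g (x ∘ y)⟩` is realized by a
Schwartz function. -/
lemma exists_conv (T : TD n)
    (hT : ∀ f : SchwartzMap (H n) ℂ, ∃ h : SchwartzMap (H n) ℂ, ∀ x, LConvAt T f x (h x))
    (g : SchwartzMap (H n) ℂ) :
    ∃ G : SchwartzMap (H n) ℂ, ∀ (x : H n) (ψ : SchwartzMap (H n) ℂ),
      (∀ y, ψ y = g (hmul x y)) → T ψ = G x := by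
  obtain ⟨h, hh⟩ := hT (icomp g)
  refine ⟨icomp h, fun x ψ hψ => ?_⟩
  rw [icomp_apply]
  refine hh (hinv x) ψ (fun y => ?_)
  rw [hψ y, icomp_apply, hinv_hmul, hinv_hinv, hinv_hinv]

lemma schwartz_sum_apply {ι : Type*} (s : Finset ι) (g : ι → SchwartzMap (H n) ℂ) (x : H n) :
    (∑ j ∈ s, g j) x = ∑ j ∈ s, g j x := by
  classical
  induction s using Finset.cons_induction with
  | empty => simp [SchwartzMap.coe_zero]
  | cons a s ha ih => rw [Finset.sum_cons, SchwartzMap.add_apply, ih, Finset.sum_cons]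

/-- the pull-out identity for additive coordinates -/
lemma pull (T : TD n) (FT : SchwartzMap (H n) ℂ → SchwartzMap (H n) ℂ)
    (hFT : ∀ g x (ψ : SchwartzMap (H n) ℂ), (∀ y, ψ y = g (hmul x y)) → T ψ = FT g x)
    (c : H n →L[ℝ] ℝ) (hc : ∀ x y, c (hmul x y) = c x + c y)
    (g : SchwartzMap (H n) ℂ) (x : H n) :
    T (cmul c (rho x g)) = FT (cmul c g) x - (c x : ℂ) * T (rho x g) := by
  have key : rho x (cmul c g) = (c x : ℂ) • (rho x g) + cmul c (rho x g) := by
    ext y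
    simp only [SchwartzMap.add_apply, SchwartzMap.smul_apply, rho_apply, cmul_apply, hc,
      smul_eq_mul]
    push_cast
    ring
  have h1 : T (rho x (cmul c g)) = FT (cmul c g) x :=
    hFT (cmul c g) x _ (fun y => rfl)
  rw [key] at h1
  rw [map_add, T.map_smul, smul_eq_mul] at h1
  linear_combination h1

/-- **Derivatives of inverses.** If `A, B` are `S`-convolvers with `A *₁ B = B *₁ A = δ₀`,
then `T_{kj}B = −B *₁ T_{kj}A *₁ B` (`k = 1, 2`) and
`T₃B = −B *₁ T₃A *₁ B − Σ_j B *₁ T_{1j}A *₁ T_{2j}B`. -/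
theorem statement8 (n : ℕ) (A B : TD n)
    (hA : IsSConvolver A) (hB : IsSConvolver B)
    -- `A *₁ B = δ₀`
    (hAB : ∀ (f h : SchwartzMap (H n) ℂ),
      (∀ x, ∀ ψ : SchwartzMap (H n) ℂ, (∀ y, ψ y = f (hmul x y)) → h x = B ψ) →
      A h = f 0)
    -- `B *₁ A = δ₀`
    (hBA : ∀ (f h : SchwartzMap (H n) ℂ),
      (∀ x, ∀ ψ : SchwartzMap (H n) ℂ, (∀ y, ψ y = f (hmul x y)) → h x = A ψ) →
      B h = f 0) :
    -- `T_{1j}B = −B *₁ T_{1j}A *₁ B` and `T_{2j}B = −B *₁ T_{2j}A *₁ B`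
    (∀ j : Fin n, ∀ (TA TB X Y : TD n),
      MonoMulTD (e1idx j) A TA → MonoMulTD (e1idx j) B TB →
      ConvTD B TA X → ConvTD X B Y →
      ∀ f : SchwartzMap (H n) ℂ, TB f = -(Y f)) ∧
    (∀ j : Fin n, ∀ (TA TB X Y : TD n),
      MonoMulTD (e2idx j) A TA → MonoMulTD (e2idx j) B TB →
      ConvTD B TA X → ConvTD X B Y →
      ∀ f : SchwartzMap (H n) ℂ, TB f = -(Y f)) ∧
    -- `T₃B = −B *₁ T₃A *₁ B − Σ_j B *₁ T_{1j}A *₁ T_{2j}B`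
    (∀ (TA3 TB3 X Y : TD n) (A1 B2 Wj Z : Fin n → TD n),
      MonoMulTD e3idx A TA3 → MonoMulTD e3idx B TB3 →
      ConvTD B TA3 X → ConvTD X B Y →
      (∀ j, MonoMulTD (e1idx j) A (A1 j)) →
      (∀ j, MonoMulTD (e2idx j) B (B2 j)) →
      (∀ j, ConvTD B (A1 j) (Wj j)) →
      (∀ j, ConvTD (Wj j) (B2 j) (Z j)) →
      ∀ f : SchwartzMap (H n) ℂ, TB3 f = -(Y f) - ∑ j : Fin n, Z j f) := by
  classical
  choose FA hFA using fun g => exists_conv A (fun f => (hA f).1) g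
  choose FB hFB using fun g => exists_conv B (fun f => (hB f).1) g
  have hFAval : ∀ g x, A (rho x g) = FA g x := fun g x => hFA g x _ (fun y => rfl)
  have hFBval : ∀ g x, B (rho x g) = FB g x := fun g x => hFB g x _ (fun y => rfl)
  have L1 : ∀ (f : SchwartzMap (H n) ℂ) (x : H n), A (rho x (FB f)) = f x := by
    intro f x
    have hc : ∀ z, ∀ ψ : SchwartzMap (H n) ℂ, (∀ y, ψ y = (rho x f) (hmul z y)) →
        (rho x (FB f)) z = B ψ := by
      intro z ψ hψ
      rw [rho_apply]
      refine (hFB f (hmul x z) ψ (fun y => ?_)).symm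
      rw [hψ y, rho_apply, hmul_assoc]
    have := hAB (rho x f) (rho x (FB f)) hc
    rw [this, rho_apply, hmul_zero]
  have kill : ∀ g : SchwartzMap (H n) ℂ, B (FA g) = g 0 :=
    fun g => hBA g (FA g) (fun x ψ hψ => (hFA g x ψ hψ).symm)
  have pullA := pull A FA hFA
  have pullB := pull B FB hFB
  have main12 : ∀ (c : H n →L[ℝ] ℝ), (∀ x y, c (hmul x y) = c x + c y) →
      ∀ (γ : MIdx n), (∀ u : H n, (mono γ u : ℝ) = c u) →
      ∀ (TA TB X Y : TD n),
      MonoMulTD γ A TA → MonoMulTD γ B TB →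
      ConvTD B TA X → ConvTD X B Y →
      ∀ f : SchwartzMap (H n) ℂ, TB f = -(Y f) := by
    intro c hc γ hγ TA TB X Y hTA hTB hX hY f
    have s1 : TB f = B (cmul c f) := hTB f (cmul c f) (fun u => by rw [cmul_apply, hγ u])
    have s2 : Y f = X (FB f) := hY f (FB f) (fun x ψ hψ => (hFB f x ψ hψ).symm)
    have s3 : X (FB f) = B (FA (cmul c (FB f)) - cmul c f) := by
      refine hX (FB f) _ (fun x ψ hψ => ?_)
      have hψ' : ψ = rho x (FB f) := SchwartzMap.ext fun y => by rw [hψ y, rho_apply]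
      have e1 : TA ψ = A (cmul c ψ) := hTA ψ (cmul c ψ) (fun u => by rw [cmul_apply, hγ u])
      rw [e1, hψ', pullA c hc (FB f) x, L1 f x, SchwartzMap.sub_apply, cmul_apply]
    have s4 : B (cmul c f) + B (FA (cmul c (FB f)) - cmul c f) = B (FA (cmul c (FB f))) := by
      rw [← map_add]
      congr 1
      abel
    have s5 : B (FA (cmul c (FB f))) = 0 := by
      rw [kill, cmul_apply, map_zero]
      simp
    rw [s1, s2, s3]
    have h0 := s4.trans s5
    linear_combination h0
  refine ⟨?_, ?_, ?_⟩
  · exact fun j => main12 (c1 n j) (c1_hmul j) (e1idx j) (fun u => by rw [mono_e1, c1_apply])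
  · exact fun j => main12 (c2 n j) (c2_hmul j) (e2idx j) (fun u => by rw [mono_e2, c2_apply])
  · intro TA3 TB3 X Y A1 B2 W Z hTA3 hTB3 hX hY hA1 hB2 hW hZ f
    have s1 : TB3 f = B (cmul (c3 n) f) :=
      hTB3 f _ (fun u => by rw [cmul_apply, mono_e3, c3_apply])
    have s2 : Y f = X (FB f) := hY f (FB f) (fun x ψ hψ => (hFB f x ψ hψ).symm)
    have key3 : ∀ (g : SchwartzMap (H n) ℂ) (x : H n),
        rho x (cmul (c3 n) g) = (x.2.2 : ℂ) • rho x g + cmul (c3 n) (rho x g)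
          + ∑ j, (x.1 j : ℂ) • cmul (c2 n j) (rho x g) := by
      intro g x
      ext y
      simp only [SchwartzMap.add_apply, SchwartzMap.smul_apply, schwartz_sum_apply,
        cmul_apply, rho_apply, smul_eq_mul, c3_hmul, c2_apply]
      push_cast
      rw [add_mul, add_mul, Finset.sum_mul]
      congr 1
      exact Finset.sum_congr rfl (fun j _ => mul_assoc _ _ _)
    have e4 : ∀ x, ∀ j : Fin n, A (cmul (c2 n j) (rho x (FB f)))
        = FA (cmul (c2 n j) (FB f)) x - (x.2.1 j : ℂ) * f x := by
      intro x j
      rw [pullA (c2 n j) (c2_hmul j) (FB f) x, L1 f x, c2_apply]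
    have s3 : X (FB f) = B (FA (cmul (c3 n) (FB f)) - cmul (c3 n) f
        - ∑ j, cmul (c1 n j) (FA (cmul (c2 n j) (FB f)) - cmul (c2 n j) f)) := by
      refine hX (FB f) _ (fun x ψ hψ => ?_)
      have hψ' : ψ = rho x (FB f) := SchwartzMap.ext fun y => by rw [hψ y, rho_apply]
      have e1 : TA3 ψ = A (cmul (c3 n) (rho x (FB f))) := by
        rw [hψ']; exact hTA3 _ _ (fun u => by rw [cmul_apply, mono_e3, c3_apply])
      have e2 : A (rho x (cmul (c3 n) (FB f))) = FA (cmul (c3 n) (FB f)) x := hFAval _ x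
      rw [key3 (FB f) x, map_add, map_add, A.map_smul, smul_eq_mul, L1 f x, map_sum] at e2
      simp only [_root_.map_smul, smul_eq_mul] at e2
      simp only [e4 x] at e2
      rw [e1]
      simp only [SchwartzMap.sub_apply, schwartz_sum_apply, cmul_apply, c3_apply, c1_apply,
        c2_apply]
      linear_combination -e2
    have s4 : ∀ j, Z j f = (W j) (FB (cmul (c2 n j) f) - cmul (c2 n j) (FB f)) := by
      intro j
      refine hZ j f _ (fun x ψ hψ => ?_)
      have hψ' : ψ = rho x f := SchwartzMap.ext fun y => by rw [hψ y, rho_apply]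
      have e1 : B2 j ψ = B (cmul (c2 n j) (rho x f)) := by
        rw [hψ']; exact hB2 j _ _ (fun u => by rw [cmul_apply, mono_e2, c2_apply])
      rw [e1, pullB (c2 n j) (c2_hmul j) f x, hFBval]
      simp only [SchwartzMap.sub_apply, cmul_apply]
    have FAG : ∀ (j : Fin n) (x : H n),
        A (rho x (FB (cmul (c2 n j) f) - cmul (c2 n j) (FB f)))
          = (cmul (c2 n j) f) x - FA (cmul (c2 n j) (FB f)) x := by
      intro j x
      rw [(rho x).map_sub, A.map_sub, L1 (cmul (c2 n j) f) x, hFAval]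
    have s5 : ∀ j, (W j) (FB (cmul (c2 n j) f) - cmul (c2 n j) (FB f))
        = B (FA (cmul (c1 n j) (FB (cmul (c2 n j) f) - cmul (c2 n j) (FB f)))
            - cmul (c1 n j) (cmul (c2 n j) f - FA (cmul (c2 n j) (FB f)))) := by
      intro j
      refine hW j _ _ (fun x ψ hψ => ?_)
      have hψ' : ψ = rho x (FB (cmul (c2 n j) f) - cmul (c2 n j) (FB f)) :=
        SchwartzMap.ext fun y => by rw [hψ y, rho_apply]
      have e1 : A1 j ψ
          = A (cmul (c1 n j) (rho x (FB (cmul (c2 n j) f) - cmul (c2 n j) (FB f)))) := by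
        rw [hψ']; exact hA1 j _ _ (fun u => by rw [cmul_apply, mono_e1, c1_apply])
      rw [e1, pullA (c1 n j) (c1_hmul j) _ x, FAG j x]
      simp only [SchwartzMap.sub_apply, cmul_apply, c1_apply]
    have z1 : B (FA (cmul (c3 n) (FB f))) = 0 := by rw [kill]; simp
    have z2 : ∀ j, B (FA (cmul (c1 n j)
        (FB (cmul (c2 n j) f) - cmul (c2 n j) (FB f)))) = 0 := by
      intro j; rw [kill]; simp
    have E1 : Y f = - B (cmul (c3 n) f)
        - ∑ j, B (cmul (c1 n j) (FA (cmul (c2 n j) (FB f)) - cmul (c2 n j) f)) := by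
      rw [s2, s3, map_sub, map_sub, map_sum, z1]
      ring
    have E2 : ∀ j, Z j f
        = B (cmul (c1 n j) (FA (cmul (c2 n j) (FB f)) - cmul (c2 n j) f)) := by
      intro j
      rw [s4 j, s5 j, map_sub, z2 j]
      have hneg : (cmul (c1 n j)) (cmul (c2 n j) f - FA (cmul (c2 n j) (FB f)))
          = -((cmul (c1 n j)) (FA (cmul (c2 n j) (FB f)) - cmul (c2 n j) f)) := by
        rw [← map_neg, neg_sub]
      rw [hneg, map_neg]
      ring
    have Esum : ∑ j, Z j f
        = ∑ j, B (cmul (c1 n j) (FA (cmul (c2 n j) (FB f)) - cmul (c2 n j) f)) :=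
      Finset.sum_congr rfl (fun j _ => E2 j)
    rw [s1, E1, Esum]
    ring
end
end
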